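/- arXiv:2511.12523 — 10 statements merged into one kernel-verified Lean document; each statement's English description precedes it below -/
import Mathlib

section
/- Let β > 0, let x ∈ ℝⁿ, and let i* ∈ {1,…,n}. Let z₁,…,zₙ be i.i.d. real random variables distributed according to the Gumbel distribution G(0,β). Then almost surely there is a unique index i maximizing xᵢ + zᵢ, and the probability that this maximizing index equals i* is softmax(x/β)_{i*} = exp(x_{i*}/β) / Σ_{j=1}^n exp(x_j/β). -/
open MeasureTheory ProbabilityTheory Real Set Filter Topology

namespace GumbelAux

noncomputable def G (a s : ℝ) : ℝ := Real.exp (-(a * Real.exp (-s)))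

noncomputable def g (a s : ℝ) : ℝ := a * Real.exp (-s) * Real.exp (-(a * Real.exp (-s)))

lemma continuous_g (a : ℝ) : Continuous (g a) := by
  unfold g; fun_prop

lemma g_nonneg {a : ℝ} (ha : 0 ≤ a) (s : ℝ) : 0 ≤ g a s :=
  mul_nonneg (mul_nonneg ha (Real.exp_pos _).le) (Real.exp_pos _).le

lemma hasDerivAt_G (a s : ℝ) : HasDerivAt (G a) (g a s) s := by
  have h0 : HasDerivAt (fun s : ℝ => -(a * Real.exp (-s))) (a * Real.exp (-s)) s := by
    have h1 : HasDerivAt (fun s : ℝ => Real.exp (-s)) (-Real.exp (-s)) s := by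
      simpa [Function.comp_def] using (Real.hasDerivAt_exp (-s)).comp s (hasDerivAt_neg s)
    simpa [mul_comm, Pi.neg_def] using ((h1.const_mul a).neg)
  have := (Real.hasDerivAt_exp (-(a * Real.exp (-s)))).comp s h0
  show HasDerivAt (fun s => Real.exp (-(a * Real.exp (-s)))) (g a s) s
  simpa [G, g, mul_comm, mul_left_comm, mul_assoc, Function.comp_def] using this

lemma sq_div_four_le_exp {u : ℝ} (hu : 0 ≤ u) : u ^ 2 / 4 ≤ Real.exp u := by
  have h := Real.add_one_le_exp (u / 2)
  have he : Real.exp u = Real.exp (u / 2) * Real.exp (u / 2) := by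
    rw [← Real.exp_add]; ring_nf
  nlinarith [Real.exp_pos (u / 2)]

lemma g_le {a : ℝ} (ha : 0 < a) (s : ℝ) : g a s ≤ 4 / a * Real.exp s := by
  have hupos : 0 < Real.exp (-s) := Real.exp_pos _
  set u := Real.exp (-s) with hu
  have hexp : (a * u) ^ 2 / 4 ≤ Real.exp (a * u) := sq_div_four_le_exp (by positivity)
  have h2 : Real.exp (-(a * u)) ≤ 4 / (a * u) ^ 2 := by
    rw [le_div_iff₀ (by positivity), Real.exp_neg]
    rw [inv_mul_le_iff₀ (Real.exp_pos _)]
    nlinarith [Real.exp_pos (a * u)]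
  have hus : Real.exp s = u⁻¹ := by
    rw [hu, ← Real.exp_neg, neg_neg]
  calc a * u * Real.exp (-(a * u)) ≤ a * u * (4 / (a * u) ^ 2) := by
        exact mul_le_mul_of_nonneg_left h2 (by positivity)
    _ = 4 / (a * u) := by field_simp
    _ = 4 / a * Real.exp s := by rw [hus]; field_simp

lemma tendsto_G_atBot {a : ℝ} (ha : 0 < a) : Tendsto (G a) atBot (𝓝 0) := by
  apply Real.tendsto_exp_atBot.comp
  have h : Tendsto (fun s : ℝ => Real.exp (-s)) atBot atTop :=
    Real.tendsto_exp_atTop.comp tendsto_neg_atBot_atTop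
  exact tendsto_neg_atTop_atBot.comp (h.const_mul_atTop ha)

lemma tendsto_G_atTop {a : ℝ} : Tendsto (G a) atTop (𝓝 1) := by
  have h : Tendsto (fun s : ℝ => Real.exp (-s)) atTop (𝓝 0) :=
    Real.tendsto_exp_atBot.comp tendsto_neg_atTop_atBot
  have h2 : Tendsto (fun s : ℝ => -(a * Real.exp (-s))) atTop (𝓝 0) := by
    simpa using (h.const_mul a).neg
  have := (Real.continuous_exp.tendsto 0).comp h2
  show Tendsto (fun s => Real.exp (-(a * Real.exp (-s)))) atTop (𝓝 1)
  simpa [G, Function.comp_def] using this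

lemma integrableOn_g {a : ℝ} (ha : 0 < a) (A : ℝ) : IntegrableOn (g a) (Iic A) := by
  apply Integrable.mono' ((integrableOn_exp_Iic A).const_mul (4 / a))
    ((continuous_g a).aestronglyMeasurable.restrict)
  filter_upwards with s
  rw [Real.norm_eq_abs, abs_of_nonneg (g_nonneg ha.le s)]
  exact g_le ha s

lemma integral_g_Iic {a : ℝ} (ha : 0 < a) (A : ℝ) : ∫ s in Iic A, g a s = G a A := by
  rw [integral_Iic_of_hasDerivAt_of_tendsto' (fun s _ => hasDerivAt_G a s)
    (integrableOn_g ha A) (tendsto_G_atBot ha), sub_zero]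

noncomputable def δ (a : ℝ) : Measure ℝ := volume.withDensity fun s => ENNReal.ofReal (g a s)

lemma δ_Iic {a : ℝ} (ha : 0 < a) (A : ℝ) : δ a (Iic A) = ENNReal.ofReal (G a A) := by
  rw [δ, withDensity_apply _ measurableSet_Iic,
    ← ofReal_integral_eq_lintegral_ofReal (integrableOn_g ha A)
      (Filter.Eventually.of_forall fun s => g_nonneg ha.le s), integral_g_Iic ha A]

lemma δ_univ {a : ℝ} (ha : 0 < a) : δ a univ = 1 := by
  have h1 : Tendsto (fun A => δ a (Iic A)) atTop (𝓝 (δ a univ)) := tendsto_measure_Iic_atTop _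
  have h2 : Tendsto (fun A => δ a (Iic A)) atTop (𝓝 1) := by
    simp_rw [δ_Iic ha]
    have := (ENNReal.continuous_ofReal.tendsto 1).comp (tendsto_G_atTop (a := a))
    simpa [Function.comp_def] using this
  exact tendsto_nhds_unique h1 h2

lemma lintegral_g {a : ℝ} (ha : 0 < a) : ∫⁻ s, ENNReal.ofReal (g a s) = 1 := by
  have h := δ_univ ha
  rwa [δ, withDensity_apply _ MeasurableSet.univ, Measure.restrict_univ] at h

noncomputable def γ (β a : ℝ) : Measure ℝ := (δ a).map (fun s => β * s)

lemma γ_Iic {β : ℝ} (hβ : 0 < β) {a : ℝ} (ha : 0 < a) (t : ℝ) :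
    γ β a (Iic t) = ENNReal.ofReal (Real.exp (-(a * Real.exp (-(t / β))))) := by
  rw [γ, Measure.map_apply (measurable_const_mul β) measurableSet_Iic]
  have hpre : (fun s : ℝ => β * s) ⁻¹' Iic t = Iic (t / β) := by
    ext s
    simp [le_div_iff₀ hβ, mul_comm]
  rw [hpre, δ_Iic ha, G]

lemma γ_singleton {β : ℝ} (hβ : 0 < β) (a c : ℝ) : γ β a {c} = 0 := by
  rw [γ, Measure.map_apply (measurable_const_mul β) (measurableSet_singleton c)]
  have hpre : (fun s : ℝ => β * s) ⁻¹' {c} = {c / β} := by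
    ext s
    rw [Set.mem_preimage, Set.mem_singleton_iff, Set.mem_singleton_iff,
      eq_div_iff hβ.ne', mul_comm]
  rw [hpre, δ, withDensity_apply _ (measurableSet_singleton _),
    Measure.restrict_eq_zero.mpr Real.volume_singleton, lintegral_zero_measure]

lemma γ_univ {β : ℝ} (hβ : 0 < β) {a : ℝ} (ha : 0 < a) : γ β a univ = 1 := by
  rw [γ, Measure.map_apply (measurable_const_mul β) MeasurableSet.univ,
    Set.preimage_univ, δ_univ ha]

instance : SFinite (δ 1) := by rw [δ]; infer_instance

lemma lintegral_G {β : ℝ} (hβ : 0 < β) {b : ℝ} (hb : 0 ≤ b) :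
    ∫⁻ t, ENNReal.ofReal (Real.exp (-(b * Real.exp (-(t / β))))) ∂(γ β 1)
      = ENNReal.ofReal (1 / (1 + b)) := by
  have hb1 : (0:ℝ) < 1 + b := by linarith
  have hfm : Measurable fun t : ℝ => ENNReal.ofReal (Real.exp (-(b * Real.exp (-(t / β))))) := by
    fun_prop
  rw [γ, lintegral_map hfm (measurable_const_mul β), δ,
    lintegral_withDensity_eq_lintegral_mul _ (by unfold g; fun_prop)
      (by fun_prop : Measurable fun s : ℝ =>
        ENNReal.ofReal (Real.exp (-(b * Real.exp (-(β * s / β))))))]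
  have key : ∀ s : ℝ,
      ((fun s => ENNReal.ofReal (g 1 s)) * fun s =>
        ENNReal.ofReal (Real.exp (-(b * Real.exp (-(β * s / β)))))) s
      = ENNReal.ofReal (1 / (1 + b)) * ENNReal.ofReal (g (1 + b) s) := by
    intro s
    rw [Pi.mul_apply, mul_div_cancel_left₀ s hβ.ne', ← ENNReal.ofReal_mul (g_nonneg one_pos.le s),
      ← ENNReal.ofReal_mul (by positivity)]
    congr 1
    unfold g
    rw [one_mul, mul_assoc, ← Real.exp_add]
    have h3 : -Real.exp (-s) + -(b * Real.exp (-s)) = -((1 + b) * Real.exp (-s)) := by ring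
    rw [h3]
    field_simp
  rw [lintegral_congr key, lintegral_const_mul _ (by unfold g; fun_prop), lintegral_g hb1, mul_one]



lemma law_eq {Ω : Type*} [MeasurableSpace Ω] (P : Measure Ω) [IsProbabilityMeasure P]
    {β : ℝ} (hβ : 0 < β) {f : Ω → ℝ} (hf : Measurable f)
    (hcdf : ∀ t, P {ω | f ω ≤ t} = ENNReal.ofReal (Real.exp (-Real.exp (-t / β)))) :
    P.map f = γ β 1 := by
  haveI : IsProbabilityMeasure (P.map f) := Measure.isProbabilityMeasure_map hf.aemeasurable
  refine MeasureTheory.Measure.ext_of_Iic (P.map f) (γ β 1) fun t => ?_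
  rw [Measure.map_apply hf measurableSet_Iic, γ_Iic hβ one_pos t]
  have hset : f ⁻¹' Iic t = {ω | f ω ≤ t} := rfl
  rw [hset, hcdf t, one_mul, neg_div]

end GumbelAux

/-- **Gumbel-max trick.** If `z i` are i.i.d. Gumbel `G(0, β)` random variables
(CDF `t ↦ exp (-exp (-t/β))`), then almost surely there is a unique index maximizing
`x i + z i`, and the probability that this maximizer is `i*` equals
`softmax (x/β) i* = exp (x i* / β) / ∑ j, exp (x j / β)`. -/
theorem gumbel_max_trick {Ω : Type*} [MeasurableSpace Ω] (P : Measure Ω)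
    [IsProbabilityMeasure P] (n : ℕ) (hn : 0 < n) (β : ℝ) (hβ : 0 < β)
    (x : Fin n → ℝ) (istar : Fin n)
    (z : Fin n → Ω → ℝ) (hmeas : ∀ i, Measurable (z i))
    (hindep : iIndepFun z P)
    (hcdf : ∀ i t, P {ω | z i ω ≤ t} = ENNReal.ofReal (Real.exp (-Real.exp (-t / β)))) :
    (∀ᵐ ω ∂P, ∃! i : Fin n, ∀ j, j ≠ i → x j + z j ω < x i + z i ω) ∧
    P {ω | ∀ j, j ≠ istar → x j + z j ω < x istar + z istar ω}
      = ENNReal.ofReal (Real.exp (x istar / β) / ∑ j, Real.exp (x j / β)) := by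
  classical
  have hlaw : ∀ i, P.map (z i) = GumbelAux.γ β 1 := fun i =>
    GumbelAux.law_eq P hβ (hmeas i) (fun t => hcdf i t)
  haveI hγprob : IsProbabilityMeasure (GumbelAux.γ β 1) := ⟨GumbelAux.γ_univ hβ one_pos⟩
  -- no ties, pairwise
  have hzero : ∀ i j : Fin n, i ≠ j → P {ω | x i + z i ω = x j + z j ω} = 0 := by
    intro i j hij
    have hind := hindep.indepFun hij
    rw [indepFun_iff_map_prod_eq_prod_map_map (hmeas i).aemeasurable (hmeas j).aemeasurable] at hind
    have hD : MeasurableSet {p : ℝ × ℝ | x i + p.1 = x j + p.2} :=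
      measurableSet_eq_fun (by fun_prop) (by fun_prop)
    have hset : {ω | x i + z i ω = x j + z j ω}
        = (fun ω => (z i ω, z j ω)) ⁻¹' {p : ℝ × ℝ | x i + p.1 = x j + p.2} := rfl
    rw [hset, ← Measure.map_apply ((hmeas i).prodMk (hmeas j)) hD, hind, hlaw i, hlaw j,
      Measure.prod_apply hD]
    have hsl : ∀ t : ℝ,
        (GumbelAux.γ β 1) (Prod.mk t ⁻¹' {p : ℝ × ℝ | x i + p.1 = x j + p.2}) = 0 := by
      intro t
      have hpre : Prod.mk t ⁻¹' {p : ℝ × ℝ | x i + p.1 = x j + p.2} = {x i + t - x j} := by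
        ext s
        simp only [Set.mem_preimage, Set.mem_setOf_eq, Set.mem_singleton_iff]
        constructor <;> intro h <;> linarith
      rw [hpre, GumbelAux.γ_singleton hβ]
    simp only [hsl, lintegral_zero]
  -- a.e. no ties
  have hne : ∀ᵐ ω ∂P, ∀ i j : Fin n, i ≠ j → x i + z i ω ≠ x j + z j ω := by
    rw [ae_all_iff]
    intro i
    rw [ae_all_iff]
    intro j
    by_cases hij : i = j
    · subst hij
      filter_upwards with ω h
      exact absurd rfl h
    · have h0 : ∀ᵐ ω ∂P, x i + z i ω ≠ x j + z j ω := by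
        rw [ae_iff]
        simpa only [ne_eq, not_not] using hzero i j hij
      filter_upwards [h0] with ω h _
      exact h
  constructor
  · -- part (a)
    filter_upwards [hne] with ω hω
    obtain ⟨i₀, -, hmax⟩ := Finset.exists_max_image Finset.univ (fun i => x i + z i ω)
      ⟨⟨0, hn⟩, Finset.mem_univ _⟩
    refine ⟨i₀, fun j hj => lt_of_le_of_ne (hmax j (Finset.mem_univ j)) (hω j i₀ hj), ?_⟩
    intro y hy
    by_contra hny
    exact absurd (hy i₀ (Ne.symm hny)) (not_lt.mpr (hmax y (Finset.mem_univ y)))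
  · -- part (b)
    set T : Finset (Fin n) := Finset.univ.erase istar with hT
    set W : Ω → (T → ℝ) := fun ω j => z j.1 ω with hW
    have hWmeas : Measurable W := measurable_pi_lambda _ fun j => hmeas j.1
    have hdisj : Disjoint ({istar} : Finset (Fin n)) T := by
      simp [hT, Finset.disjoint_left]
    have hIF := hindep.indepFun_finset {istar} T hdisj hmeas
    have hYW : IndepFun (z istar) W P := by
      have h := hIF.comp (φ := fun v => v ⟨istar, Finset.mem_singleton_self istar⟩)
        (ψ := id) (measurable_pi_apply _ : Measurable fun v : ({istar} : Finset (Fin n)) → ℝ => v ⟨istar, Finset.mem_singleton_self istar⟩) measurable_id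
      exact h
    set A : Set (ℝ × (T → ℝ)) := {p | ∀ j : T, x j.1 + p.2 j < x istar + p.1} with hA
    have hAm : MeasurableSet A := by
      have hrepr : A = ⋂ j : T, {p : ℝ × (T → ℝ) | x j.1 + p.2 j < x istar + p.1} := by
        ext p; simp [hA]
      rw [hrepr]
      exact MeasurableSet.iInter fun j => measurableSet_lt (by fun_prop) (by fun_prop)
    have hev : {ω | ∀ j, j ≠ istar → x j + z j ω < x istar + z istar ω}
        = (fun ω => (z istar ω, W ω)) ⁻¹' A := by
      ext ω
      simp only [Set.mem_setOf_eq, Set.mem_preimage, hA, hW]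
      constructor
      · intro h j
        exact h j.1 (Finset.ne_of_mem_erase j.2)
      · intro h j hj
        exact h ⟨j, Finset.mem_erase.mpr ⟨hj, Finset.mem_univ j⟩⟩
    set c : Fin n → ℝ := fun j => Real.exp ((x j - x istar) / β) with hc
    set b : ℝ := ∑ j ∈ T, c j with hb
    have hbnn : (0:ℝ) ≤ b := Finset.sum_nonneg fun j _ => (Real.exp_pos _).le
    have hslice : ∀ t : ℝ, (P.map W) (Prod.mk t ⁻¹' A)
        = ENNReal.ofReal (Real.exp (-(b * Real.exp (-(t / β))))) := by
      intro t
      rw [Measure.map_apply hWmeas (hAm.preimage measurable_prodMk_left)]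
      have hpre : W ⁻¹' (Prod.mk t ⁻¹' A) = ⋂ i ∈ T, z i ⁻¹' Iio (x istar + t - x i) := by
        ext ω
        simp only [Set.mem_preimage, Set.mem_setOf_eq, hA, hW, Set.mem_iInter, Set.mem_Iio]
        constructor
        · intro h i hi
          have := h ⟨i, hi⟩
          linarith
        · intro h j
          have := h j.1 j.2
          linarith
      rw [hpre, hindep.measure_inter_preimage_eq_mul T (fun i _ => measurableSet_Iio)]
      have hfac : ∀ i, P (z i ⁻¹' Iio (x istar + t - x i))
          = ENNReal.ofReal (Real.exp (-(Real.exp (-((x istar + t - x i) / β))))) := by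
        intro i
        rw [← Measure.map_apply (hmeas i) measurableSet_Iio, hlaw i,
          measure_congr (Iio_ae_eq_Iic' (GumbelAux.γ_singleton hβ 1 _)),
          GumbelAux.γ_Iic hβ one_pos, one_mul]
      simp only [hfac]
      rw [← ENNReal.ofReal_prod_of_nonneg (fun i _ => (Real.exp_pos _).le)]
      congr 1
      rw [← Real.exp_sum]
      congr 1
      have hterm : ∀ i ∈ T, -(Real.exp (-((x istar + t - x i) / β)))
          = -(c i * Real.exp (-(t / β))) := by
        intro i _
        rw [hc]
        rw [← Real.exp_add]
        congr 2
        field_simp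
        ring
      rw [Finset.sum_congr rfl hterm, Finset.sum_neg_distrib, hb, Finset.sum_mul]
    rw [hev, ← Measure.map_apply ((hmeas istar).prodMk hWmeas) hAm,
      (indepFun_iff_map_prod_eq_prod_map_map (hmeas istar).aemeasurable
        hWmeas.aemeasurable).mp hYW, hlaw istar]
    haveI : IsProbabilityMeasure (P.map W) := Measure.isProbabilityMeasure_map hWmeas.aemeasurable
    rw [Measure.prod_apply hAm]
    calc ∫⁻ t, (P.map W) (Prod.mk t ⁻¹' A) ∂(GumbelAux.γ β 1)
        = ∫⁻ t, ENNReal.ofReal (Real.exp (-(b * Real.exp (-(t / β))))) ∂(GumbelAux.γ β 1) :=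
          lintegral_congr hslice
      _ = ENNReal.ofReal (1 / (1 + b)) := GumbelAux.lintegral_G hβ hbnn
      _ = ENNReal.ofReal (Real.exp (x istar / β) / ∑ j, Real.exp (x j / β)) := by
          congr 1
          have h1b : 1 + b = ∑ j, c j := by
            rw [hb, hT, ← Finset.add_sum_erase _ _ (Finset.mem_univ istar)]
            congr 1
            simp [hc]
          have hcsum : ∑ j, c j = (∑ j, Real.exp (x j / β)) / Real.exp (x istar / β) := by
            rw [Finset.sum_div]
            refine Finset.sum_congr rfl fun j _ => ?_
            simp only [hc]
            rw [← Real.exp_sub]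
            congr 1
            ring
          rw [h1b, hcsum, one_div_div]
end

section
/- Let β > 0, let x ∈ ℝⁿ, and let i* ∈ {1,…,n}. Let z₁,…,zₙ be i.i.d. real random variables distributed according to the Gumbel distribution G(0,β). Then almost surely there is a unique index i minimizing xᵢ − zᵢ, and the probability that this minimizing index equals i* is softmax(−x/β)_{i*} = exp(−x_{i*}/β) / Σ_{j=1}^n exp(−x_j/β). -/
open MeasureTheory ProbabilityTheory Real Set

/-- exponential integral on the half line. -/
lemma gmt_exp_lintegral {b : ℝ} (hb : 0 < b) :
    ∫⁻ u in Ioi (0:ℝ), ENNReal.ofReal (Real.exp (-(b * u))) = ENNReal.ofReal (1 / b) := by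
  have hint : IntegrableOn (fun u : ℝ => Real.exp (-(b * u))) (Ioi 0) := by
    simpa [neg_mul] using exp_neg_integrableOn_Ioi 0 hb
  rw [← MeasureTheory.ofReal_integral_eq_lintegral_ofReal hint
    (Filter.Eventually.of_forall fun u => (Real.exp_pos _).le)]
  congr 1
  have hderiv : ∀ u ∈ Ici (0:ℝ), HasDerivAt (fun v : ℝ => -Real.exp (-(b * v)) / b)
      (Real.exp (-(b * u))) u := by
    intro u _
    have h1 : HasDerivAt (fun v : ℝ => -(b * v)) (-b) u := by
      simpa using ((hasDerivAt_id u).const_mul (-b))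
    have h2 := (h1.exp.neg).div_const b
    exact h2.congr_deriv (by rw [div_eq_iff hb.ne']; ring)
  have hexp : Filter.Tendsto (fun v : ℝ => Real.exp (-(b * v))) Filter.atTop (nhds 0) := by
    have := tendsto_exp_atBot.comp (Filter.Tendsto.const_mul_atTop_of_neg
      (neg_neg_iff_pos.2 hb) (Filter.tendsto_id (α := ℝ)))
    exact this.congr (fun v => by simp [Function.comp, neg_mul])
  have htop : Filter.Tendsto (fun v : ℝ => -Real.exp (-(b * v)) / b) Filter.atTop (nhds (-0 / b)) :=
    (hexp.neg).div_const b
  have := integral_Ioi_of_hasDerivAt_of_tendsto' hderiv hint htop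
  rw [this]
  simp only [mul_zero, neg_zero, Real.exp_zero]
  field_simp
  norm_num

noncomputable def gmtNu : Measure ℝ :=
  (volume.restrict (Ioi 0)).withDensity fun u => ENNReal.ofReal (Real.exp (-u))

noncomputable def gmtMu (β : ℝ) : Measure ℝ :=
  gmtNu.map (fun u => -β * Real.log u)

lemma gmt_measurable_g (β : ℝ) : Measurable (fun u : ℝ => -β * Real.log u) :=
  Real.measurable_log.const_mul _

lemma gmt_lintegral_Ici (a : ℝ) :
    ∫⁻ u in Ici a, ENNReal.ofReal (Real.exp (-u)) = ENNReal.ofReal (Real.exp (-a)) := by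
  rw [setLIntegral_congr (Ioi_ae_eq_Ici (a := a)).symm]
  have hint : IntegrableOn (fun u : ℝ => Real.exp (-u)) (Ioi a) := by
    simpa [neg_mul, one_mul] using exp_neg_integrableOn_Ioi a one_pos
  rw [← MeasureTheory.ofReal_integral_eq_lintegral_ofReal hint
    (Filter.Eventually.of_forall fun u => (Real.exp_pos _).le), integral_exp_neg_Ioi]

lemma gmt_lintegral_Ioi (a : ℝ) :
    ∫⁻ u in Ioi a, ENNReal.ofReal (Real.exp (-u)) = ENNReal.ofReal (Real.exp (-a)) := by
  rw [setLIntegral_congr (Ioi_ae_eq_Ici (a := a))]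
  exact gmt_lintegral_Ici a

lemma gmt_preimage_Iic {β : ℝ} (hβ : 0 < β) (s : ℝ) :
    {u : ℝ | -β * Real.log u ≤ s} ∩ Ioi 0 = Ici (Real.exp (-s / β)) := by
  ext u
  simp only [mem_inter_iff, mem_setOf_eq, mem_Ioi, mem_Ici]
  constructor
  · rintro ⟨h1, h2⟩
    have hlog : -s / β ≤ Real.log u := by
      rw [div_le_iff₀ hβ] at *
      nlinarith
    calc Real.exp (-s / β) ≤ Real.exp (Real.log u) := Real.exp_le_exp.2 hlog
      _ = u := Real.exp_log h2
  · intro h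
    have h2 : 0 < u := lt_of_lt_of_le (Real.exp_pos _) h
    have hlog : -s / β ≤ Real.log u := (Real.le_log_iff_exp_le h2).2 h
    refine ⟨?_, h2⟩
    rw [div_le_iff₀ hβ] at hlog
    nlinarith

lemma gmt_preimage_Iio {β : ℝ} (hβ : 0 < β) (s : ℝ) :
    {u : ℝ | -β * Real.log u < s} ∩ Ioi 0 = Ioi (Real.exp (-s / β)) := by
  ext u
  simp only [mem_inter_iff, mem_setOf_eq, mem_Ioi]
  constructor
  · rintro ⟨h1, h2⟩
    have hlog : -s / β < Real.log u := by
      rw [div_lt_iff₀ hβ] at *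
      nlinarith
    calc Real.exp (-s / β) < Real.exp (Real.log u) := Real.exp_lt_exp.2 hlog
      _ = u := Real.exp_log h2
  · intro h
    have h2 : 0 < u := (Real.exp_pos _).trans h
    have hlog : -s / β < Real.log u := (Real.lt_log_iff_exp_lt h2).2 h
    refine ⟨?_, h2⟩
    rw [div_lt_iff₀ hβ] at hlog
    nlinarith

lemma gmtNu_apply {T : Set ℝ} (hT : MeasurableSet T) :
    gmtNu T = ∫⁻ u in T ∩ Ioi 0, ENNReal.ofReal (Real.exp (-u)) := by
  rw [gmtNu, withDensity_apply _ hT, Measure.restrict_restrict hT]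

lemma gmtMu_Iic {β : ℝ} (hβ : 0 < β) (s : ℝ) :
    gmtMu β (Iic s) = ENNReal.ofReal (Real.exp (-Real.exp (-s / β))) := by
  rw [gmtMu, Measure.map_apply (gmt_measurable_g β) measurableSet_Iic]
  have hT : MeasurableSet ((fun u : ℝ => -β * Real.log u) ⁻¹' Iic s) :=
    (gmt_measurable_g β) measurableSet_Iic
  rw [gmtNu_apply hT]
  have : (fun u : ℝ => -β * Real.log u) ⁻¹' Iic s ∩ Ioi 0 = Ici (Real.exp (-s / β)) :=
    gmt_preimage_Iic hβ s
  rw [this, gmt_lintegral_Ici]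

lemma gmtMu_Iio {β : ℝ} (hβ : 0 < β) (s : ℝ) :
    gmtMu β (Iio s) = ENNReal.ofReal (Real.exp (-Real.exp (-s / β))) := by
  rw [gmtMu, Measure.map_apply (gmt_measurable_g β) measurableSet_Iio]
  have hT : MeasurableSet ((fun u : ℝ => -β * Real.log u) ⁻¹' Iio s) :=
    (gmt_measurable_g β) measurableSet_Iio
  rw [gmtNu_apply hT]
  have : (fun u : ℝ => -β * Real.log u) ⁻¹' Iio s ∩ Ioi 0 = Ioi (Real.exp (-s / β)) :=
    gmt_preimage_Iio hβ s
  rw [this, gmt_lintegral_Ioi]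

instance gmtMu_prob (β : ℝ) : IsProbabilityMeasure (gmtMu β) := by
  constructor
  rw [gmtMu, Measure.map_apply (gmt_measurable_g β) MeasurableSet.univ,
    Set.preimage_univ, gmtNu_apply MeasurableSet.univ, Set.univ_inter]
  rw [gmt_lintegral_Ioi]
  simp

lemma gmtMu_lintegral (β : ℝ) {f : ℝ → ENNReal} (hf : Measurable f) :
    ∫⁻ t, f t ∂(gmtMu β)
      = ∫⁻ u in Ioi 0, ENNReal.ofReal (Real.exp (-u)) * f (-β * Real.log u) := by
  rw [gmtMu, lintegral_map hf (gmt_measurable_g β), gmtNu]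
  have := lintegral_withDensity_eq_lintegral_mul (volume.restrict (Ioi 0))
    (f := fun u => ENNReal.ofReal (Real.exp (-u))) (ENNReal.measurable_ofReal.comp (Real.continuous_exp.measurable.comp measurable_neg))
    (g := fun a => f (-β * Real.log a)) (hf.comp (gmt_measurable_g β))
  exact this

lemma gmt_law {Ω : Type*} [MeasurableSpace Ω] (P : Measure Ω) [IsProbabilityMeasure P]
    {β : ℝ} (hβ : 0 < β) {n : ℕ} (z : Fin n → Ω → ℝ) (hmeas : ∀ i, Measurable (z i))
    (hcdf : ∀ i t, P {ω | z i ω ≤ t} = ENNReal.ofReal (Real.exp (-Real.exp (-t / β))))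
    (i : Fin n) : P.map (z i) = gmtMu β := by
  haveI : IsProbabilityMeasure (P.map (z i)) := Measure.isProbabilityMeasure_map (hmeas i).aemeasurable
  refine Measure.ext_of_Iic (P.map (z i)) (gmtMu β) fun a => ?_
  rw [Measure.map_apply (hmeas i) measurableSet_Iic, gmtMu_Iic hβ]
  exact hcdf i a

lemma gmt_joint_law {Ω : Type*} [MeasurableSpace Ω] (P : Measure Ω) [IsProbabilityMeasure P]
    {β : ℝ} (hβ : 0 < β) {n : ℕ} (z : Fin n → Ω → ℝ) (hmeas : ∀ i, Measurable (z i))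
    (hindep : iIndepFun z P)
    (hcdf : ∀ i t, P {ω | z i ω ≤ t} = ENNReal.ofReal (Real.exp (-Real.exp (-t / β)))) :
    P.map (fun ω i => z i ω) = Measure.pi (fun _ : Fin n => gmtMu β) := by
  have hZ : Measurable (fun ω i => z i ω) := measurable_pi_lambda _ hmeas
  refine (Measure.pi_eq fun s hs => ?_).symm
  rw [Measure.map_apply hZ (MeasurableSet.univ_pi hs)]
  have h1 : (fun ω i => z i ω) ⁻¹' (Set.univ.pi s) = ⋂ i, z i ⁻¹' s i := by
    ext ω; simp [Set.mem_univ_pi]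
  have h2 := hindep.measure_inter_preimage_eq_mul Finset.univ (fun i _ => hs i)
  simp only [Finset.mem_univ, Set.iInter_true, Set.iInter_iInter_eq_left] at h2
  rw [h1, h2]
  refine Finset.prod_congr rfl fun i _ => ?_
  rw [← gmt_law P hβ z hmeas hcdf i, Measure.map_apply (hmeas i) (hs i)]

lemma gmt_event_prob {Ω : Type*} [MeasurableSpace Ω] (P : Measure Ω) [IsProbabilityMeasure P]
    {β : ℝ} (hβ : 0 < β) {m : ℕ} (x : Fin (m + 1) → ℝ) (z : Fin (m + 1) → Ω → ℝ)
    (hmeas : ∀ i, Measurable (z i))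
    (hindep : iIndepFun z P)
    (hcdf : ∀ i t, P {ω | z i ω ≤ t} = ENNReal.ofReal (Real.exp (-Real.exp (-t / β))))
    (i : Fin (m + 1)) :
    P {ω | ∀ j, j ≠ i → x i - z i ω < x j - z j ω}
      = ENNReal.ofReal (Real.exp (-x i / β) / ∑ j, Real.exp (-x j / β)) := by
  classical
  set μ : Measure ℝ := gmtMu β with hμdef
  set lam : Fin (m + 1) → ℝ := fun j => Real.exp ((x i - x j) / β) with hlam
  set κ : ℝ := ∑ k : Fin m, lam (i.succAbove k) with hκ
  have hκ0 : 0 ≤ κ := Finset.sum_nonneg fun k _ => (Real.exp_pos _).le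
  -- the event as a preimage
  set S : Set (Fin (m + 1) → ℝ) := {y | ∀ j, j ≠ i → x i - y i < x j - y j} with hSdef
  have hS : MeasurableSet S := by
    have : S = ⋂ j, {y : Fin (m + 1) → ℝ | j ≠ i → x i - y i < x j - y j} := by
      ext y; simp [hSdef, Set.mem_iInter]
    rw [this]
    refine MeasurableSet.iInter fun j => ?_
    by_cases hj : j = i
    · subst hj; simp
    · have : {y : Fin (m + 1) → ℝ | j ≠ i → x i - y i < x j - y j}
          = {y : Fin (m + 1) → ℝ | x i - y i < x j - y j} := by
        ext y; simp [hj]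
      rw [this]
      exact measurableSet_lt (measurable_const.sub (measurable_pi_apply i))
        (measurable_const.sub (measurable_pi_apply j))
  have hZ : Measurable (fun ω (j : Fin (m + 1)) => z j ω) := measurable_pi_lambda _ hmeas
  have hev : {ω | ∀ j, j ≠ i → x i - z i ω < x j - z j ω}
      = (fun ω (j : Fin (m + 1)) => z j ω) ⁻¹' S := rfl
  rw [hev, ← Measure.map_apply hZ hS,
    gmt_joint_law P hβ z hmeas hindep hcdf]
  -- decompose the product measure at coordinate i
  set e := MeasurableEquiv.piFinSuccAbove (fun _ : Fin (m + 1) => ℝ) i with he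
  have hmp := measurePreserving_piFinSuccAbove (fun _ : Fin (m + 1) => μ) i
  set T : Set (ℝ × (Fin m → ℝ)) := e.symm ⁻¹' S with hTdef
  have hT : MeasurableSet T := e.symm.measurable hS
  have hpre : e ⁻¹' T = S := by
    ext y; simp [hTdef]
  have h1 : Measure.pi (fun _ : Fin (m + 1) => μ) S
      = (μ.prod (Measure.pi fun _ : Fin m => μ)) T := by
    rw [← hpre]
    exact hmp.measure_preimage hT.nullMeasurableSet
  have hTeq : T = {p : ℝ × (Fin m → ℝ) |
      ∀ k, p.2 k < p.1 + (x (i.succAbove k) - x i)} := by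
    ext ⟨t, w⟩
    simp only [hTdef, he, Set.mem_preimage, hSdef, Set.mem_setOf_eq,
      MeasurableEquiv.piFinSuccAbove_symm_apply, Fin.insertNthEquiv, Equiv.coe_fn_mk]
    constructor
    · intro h k
      have := h (i.succAbove k) (Fin.succAbove_ne i k)
      rw [Fin.insertNth_apply_same, Fin.insertNth_apply_succAbove] at this
      linarith
    · intro h j hj
      obtain ⟨k, rfl⟩ := Fin.exists_succAbove_eq hj
      rw [Fin.insertNth_apply_same, Fin.insertNth_apply_succAbove]
      have := h k
      linarith
  rw [hTeq] at hT h1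
  rw [h1, Measure.prod_apply hT]
  have hslice : ∀ t : ℝ, (Prod.mk t ⁻¹' {p : ℝ × (Fin m → ℝ) |
      ∀ k, p.2 k < p.1 + (x (i.succAbove k) - x i)})
      = Set.univ.pi (fun k => Iio (t + (x (i.succAbove k) - x i))) := by
    intro t; ext w; simp [Set.mem_univ_pi]
  have hF : ∀ t : ℝ, Measure.pi (fun _ : Fin m => μ) (Prod.mk t ⁻¹' {p : ℝ × (Fin m → ℝ) |
      ∀ k, p.2 k < p.1 + (x (i.succAbove k) - x i)})
      = ENNReal.ofReal (∏ k : Fin m,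
          Real.exp (-Real.exp (-(t + (x (i.succAbove k) - x i)) / β))) := by
    intro t
    rw [hslice t, Measure.pi_pi]
    rw [ENNReal.ofReal_prod_of_nonneg (fun k _ => (Real.exp_pos _).le)]
    refine Finset.prod_congr rfl fun k _ => ?_
    rw [hμdef, gmtMu_Iio hβ]
  simp_rw [hF]
  -- change of variables to the exponential race
  have hcont : Continuous fun t : ℝ => ∏ k : Fin m,
      Real.exp (-Real.exp (-(t + (x (i.succAbove k) - x i)) / β)) := by
    refine continuous_finset_prod _ fun k _ => ?_
    fun_prop
  have hFmeas : Measurable fun t : ℝ => ENNReal.ofReal (∏ k : Fin m,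
      Real.exp (-Real.exp (-(t + (x (i.succAbove k) - x i)) / β))) :=
    hcont.measurable.ennreal_ofReal
  rw [hμdef, gmtMu_lintegral β hFmeas]
  have h_eq : ∀ u ∈ Ioi (0:ℝ),
      ENNReal.ofReal (Real.exp (-u)) * ENNReal.ofReal (∏ k : Fin m,
        Real.exp (-Real.exp (-((-β * Real.log u) + (x (i.succAbove k) - x i)) / β)))
      = ENNReal.ofReal (Real.exp (-((κ + 1) * u))) := by
    intro u hu
    have hu' : (0:ℝ) < u := hu
    have hterm : ∀ k : Fin m,
        Real.exp (-((-β * Real.log u) + (x (i.succAbove k) - x i)) / β)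
          = u * lam (i.succAbove k) := by
      intro k
      rw [hlam]
      dsimp only
      rw [← Real.exp_log hu', ← Real.exp_add, Real.exp_log hu']
      congr 1
      field_simp
      ring
    simp_rw [hterm]
    have hprod : ∏ k : Fin m, Real.exp (-(u * lam (i.succAbove k)))
        = Real.exp (-(u * κ)) := by
      rw [← Real.exp_sum]
      congr 1
      rw [hκ, Finset.mul_sum, ← Finset.sum_neg_distrib]
    rw [hprod, ← ENNReal.ofReal_mul (Real.exp_pos _).le, ← Real.exp_add]
    congr 2
    ring
  rw [setLIntegral_congr_fun measurableSet_Ioi h_eq]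
  rw [gmt_exp_lintegral (by positivity : (0:ℝ) < κ + 1)]
  congr 1
  have hS0 : (0:ℝ) < ∑ j, Real.exp (-x j / β) :=
    Finset.sum_pos (fun j _ => Real.exp_pos _) Finset.univ_nonempty
  have hsum : κ + 1 = ∑ j, lam j := by
    rw [Fin.sum_univ_succAbove lam i]
    have : lam i = 1 := by simp [hlam]
    rw [this, ← hκ]
    ring
  have hlamj : ∀ j, lam j = Real.exp (x i / β) * Real.exp (-x j / β) := by
    intro j
    rw [hlam]
    dsimp only
    rw [← Real.exp_add]
    congr 1
    field_simp
    ring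
  rw [hsum]
  simp_rw [hlamj]
  rw [← Finset.mul_sum, neg_div, Real.exp_neg, one_div, mul_inv, div_eq_mul_inv]
  ring

/-- **Gumbel-max trick, min version.** If `z i` are i.i.d. Gumbel `G(0, β)` random variables
(CDF `t ↦ exp (-exp (-t/β))`), then almost surely there is a unique index minimizing
`x i - z i`, and the probability that this minimizer is `i*` equals
`softmax (-x/β) i* = exp (-x i* / β) / ∑ j, exp (-x j / β)`. -/
theorem gumbel_min_trick {Ω : Type*} [MeasurableSpace Ω] (P : Measure Ω)
    [IsProbabilityMeasure P] (n : ℕ) (hn : 0 < n) (β : ℝ) (hβ : 0 < β)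
    (x : Fin n → ℝ) (istar : Fin n)
    (z : Fin n → Ω → ℝ) (hmeas : ∀ i, Measurable (z i))
    (hindep : iIndepFun z P)
    (hcdf : ∀ i t, P {ω | z i ω ≤ t} = ENNReal.ofReal (Real.exp (-Real.exp (-t / β)))) :
    (∀ᵐ ω ∂P, ∃! i : Fin n, ∀ j, j ≠ i → x i - z i ω < x j - z j ω) ∧
    P {ω | ∀ j, j ≠ istar → x istar - z istar ω < x j - z j ω}
      = ENNReal.ofReal (Real.exp (-x istar / β) / ∑ j, Real.exp (-x j / β)) := by
  obtain ⟨m, rfl⟩ := Nat.exists_eq_succ_of_ne_zero hn.ne'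
  have key : ∀ i : Fin (m + 1), P {ω | ∀ j, j ≠ i → x i - z i ω < x j - z j ω}
      = ENNReal.ofReal (Real.exp (-x i / β) / ∑ j, Real.exp (-x j / β)) :=
    gmt_event_prob P hβ x z hmeas hindep hcdf
  refine ⟨?_, key istar⟩
  set A : Fin (m + 1) → Set Ω := fun i => {ω | ∀ j, j ≠ i → x i - z i ω < x j - z j ω}
    with hA
  have hAmeas : ∀ i, MeasurableSet (A i) := by
    intro i
    have : A i = ⋂ j, {ω | j ≠ i → x i - z i ω < x j - z j ω} := by
      ext ω; simp [hA, Set.mem_iInter]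
    rw [this]
    refine MeasurableSet.iInter fun j => ?_
    by_cases hj : j = i
    · subst hj; simp
    · have : {ω | j ≠ i → x i - z i ω < x j - z j ω}
          = {ω | x i - z i ω < x j - z j ω} := by ext ω; simp [hj]
      rw [this]
      exact measurableSet_lt (measurable_const.sub (hmeas i)) (measurable_const.sub (hmeas j))
  have hdisj : Pairwise (Function.onFun Disjoint A) := by
    intro i j hij
    rw [Function.onFun, Set.disjoint_left]
    intro ω hi hj
    have h1 := hi j (Ne.symm hij)
    have h2 := hj i hij
    linarith
  have hS0 : (0:ℝ) < ∑ j, Real.exp (-x j / β) :=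
    Finset.sum_pos (fun j _ => Real.exp_pos _) Finset.univ_nonempty
  have hsum : ∑ i, P (A i) = 1 := by
    have : ∀ i, P (A i) = ENNReal.ofReal (Real.exp (-x i / β) / ∑ j, Real.exp (-x j / β)) :=
      fun i => key i
    simp_rw [this]
    rw [← ENNReal.ofReal_sum_of_nonneg (fun i _ => by positivity)]
    rw [← Finset.sum_div, div_self hS0.ne']
    exact ENNReal.ofReal_one
  have hunion : P (⋃ i, A i) = 1 := by
    rw [measure_iUnion hdisj hAmeas, tsum_fintype]
    exact hsum
  have hae : ∀ᵐ ω ∂P, ω ∈ ⋃ i, A i := by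
    rw [ae_iff]
    have h0 : {ω | ¬ ω ∈ ⋃ i, A i} = (⋃ i, A i)ᶜ := rfl
    rw [h0, measure_compl (MeasurableSet.iUnion hAmeas) (measure_ne_top _ _), hunion,
      measure_univ, tsub_self]
  filter_upwards [hae] with ω hω
  obtain ⟨i, hi⟩ := Set.mem_iUnion.1 hω
  refine ⟨i, hi, fun i' hi' => ?_⟩
  by_contra hne
  have h1 := hi' i (fun h => hne h.symm)
  have h2 := hi i' (fun h => hne h)
  linarith
end

section
/- Let M ∈ ℝ^{m×n} be a matrix game, T ≥ 1 an integer, i₁,…,i_T ∈ [m], j₁,…,j_T ∈ [n], and R₁, R₂ ≥ 0. Suppose Σ_{t=1}^T M(i_t, j_t) − min_{i∈[m]} Σ_{t=1}^T M(i, j_t) ≤ R₁ and max_{j∈[n]} Σ_{t=1}^T M(i_t, j) − Σ_{t=1}^T M(i_t, j_t) ≤ R₂. Then the average strategies p = (1/T) Σ_{t=1}^T e_{i_t} ∈ Δ_m and q = (1/T) Σ_{t=1}^T e_{j_t} ∈ Δ_n satisfy BRVal_c(p) − BRVal_r(q) ≤ (R₁ + R₂)/T, and hence (p,q) is an ((R₁+R₂)/T)-Nash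 equilibrium of M. -/
open Finset


private lemma mySup_div {ι : Type*} [Finite ι] [Nonempty ι] (f : ι → ℝ) (c : ℝ) (hc : 0 < c) :
    (⨆ i, f i / c) = (⨆ i, f i) / c := by
  obtain ⟨i0, hi0⟩ := Finite.exists_max f
  have h1 : (⨆ i, f i) = f i0 :=
    le_antisymm (ciSup_le hi0) (le_ciSup (Finite.bddAbove_range f) i0)
  have h2 : (⨆ i, f i / c) = f i0 / c :=
    le_antisymm (ciSup_le fun i => by gcongr; exact hi0 i)
      (le_ciSup (f := fun i => f i / c) (Finite.bddAbove_range _) i0)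
  rw [h1, h2]

private lemma myInf_div {ι : Type*} [Finite ι] [Nonempty ι] (f : ι → ℝ) (c : ℝ) (hc : 0 < c) :
    (⨅ i, f i / c) = (⨅ i, f i) / c := by
  obtain ⟨i0, hi0⟩ := Finite.exists_min f
  have h1 : (⨅ i, f i) = f i0 :=
    le_antisymm (ciInf_le (Finite.bddBelow_range f) i0) (le_ciInf hi0)
  have h2 : (⨅ i, f i / c) = f i0 / c :=
    le_antisymm (ciInf_le (Finite.bddBelow_range _) i0)
      (le_ciInf fun i => by gcongr; exact hi0 i)
  rw [h1, h2]

/-- If the cumulative regrets of the two players over `T` rounds are bounded by `R₁` and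
`R₂`, then the pair of average strategies `p = (1/T) ∑ t, e_{i t}`, `q = (1/T) ∑ t, e_{j t}`
lies in the product of simplices, satisfies `BRVal_c p - BRVal_r q ≤ (R₁ + R₂)/T`, and
hence is an `((R₁ + R₂)/T)`-Nash equilibrium of `M`. -/
theorem avg_strategies_epsNE {m n : ℕ} (hm : 0 < m) (hn : 0 < n)
    (M : Matrix (Fin m) (Fin n) ℝ) (T : ℕ) (hT : 1 ≤ T)
    (it : Fin T → Fin m) (jt : Fin T → Fin n)
    (R₁ R₂ : ℝ) (hR₁ : 0 ≤ R₁) (hR₂ : 0 ≤ R₂)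
    (h1 : (∑ t, M (it t) (jt t)) - (⨅ i : Fin m, ∑ t, M i (jt t)) ≤ R₁)
    (h2 : (⨆ j : Fin n, ∑ t, M (it t) j) - (∑ t, M (it t) (jt t)) ≤ R₂)
    (p : Fin m → ℝ) (q : Fin n → ℝ)
    (hp : p = fun a => (∑ t, if it t = a then (1 : ℝ) else 0) / T)
    (hq : q = fun b => (∑ t, if jt t = b then (1 : ℝ) else 0) / T) :
    (∀ i, 0 ≤ p i) ∧ (∑ i, p i = 1) ∧ (∀ j, 0 ≤ q j) ∧ (∑ j, q j = 1) ∧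
    (⨆ j : Fin n, ∑ i, p i * M i j) - (⨅ i : Fin m, ∑ j, M i j * q j) ≤ (R₁ + R₂) / T ∧
    ((∑ i, ∑ j, p i * M i j * q j) - (⨅ i : Fin m, ∑ j, M i j * q j) ≤ (R₁ + R₂) / T ∧
     (⨆ j : Fin n, ∑ i, p i * M i j) - (∑ i, ∑ j, p i * M i j * q j) ≤ (R₁ + R₂) / T) := by
  have : Nonempty (Fin m) := ⟨⟨0, hm⟩⟩
  have : Nonempty (Fin n) := ⟨⟨0, hn⟩⟩
  have hT0 : (0:ℝ) < T := by exact_mod_cast hT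
  -- A j = ∑ i, p i * M i j
  have hA : ∀ j, ∑ i, p i * M i j = (∑ t, M (it t) j) / T := by
    intro j
    subst hp
    simp only [div_mul_eq_mul_div, ← Finset.sum_div, Finset.sum_mul]
    rw [Finset.sum_comm]
    congr 1
    refine Finset.sum_congr rfl fun t _ => ?_
    simp [ite_mul]
  have hB : ∀ i, ∑ j, M i j * q j = (∑ t, M i (jt t)) / T := by
    intro i
    subst hq
    simp only [mul_div_assoc', ← Finset.sum_div, Finset.mul_sum]
    rw [Finset.sum_comm]
    congr 1
    refine Finset.sum_congr rfl fun t _ => ?_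
    simp [mul_ite]
  have hpsum : ∑ i, p i = 1 := by
    subst hp
    rw [← Finset.sum_div]
    rw [Finset.sum_comm]
    simp [Finset.sum_ite_eq, div_self hT0.ne']
  have hqsum : ∑ j, q j = 1 := by
    subst hq
    rw [← Finset.sum_div]
    rw [Finset.sum_comm]
    simp [Finset.sum_ite_eq, div_self hT0.ne']
  have hpnn : ∀ i, 0 ≤ p i := by
    intro i; subst hp; positivity
  have hqnn : ∀ j, 0 ≤ q j := by
    intro j; subst hq; positivity
  -- sup and inf equalities
  have hsup : (⨆ j : Fin n, ∑ i, p i * M i j) = (⨆ j : Fin n, ∑ t, M (it t) j) / T := by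
    simp only [hA]
    exact mySup_div _ _ hT0
  have hinf : (⨅ i : Fin m, ∑ j, M i j * q j) = (⨅ i : Fin m, ∑ t, M i (jt t)) / T := by
    simp only [hB]
    exact myInf_div _ _ hT0
  have hmain : (⨆ j : Fin n, ∑ i, p i * M i j) - (⨅ i : Fin m, ∑ j, M i j * q j) ≤ (R₁ + R₂) / T := by
    rw [hsup, hinf, div_sub_div_same, div_le_div_iff_of_pos_right hT0]
    linarith
  -- payoff between inf and sup
  have hbddA : BddAbove (Set.range fun j : Fin n => ∑ i, p i * M i j) := Finite.bddAbove_range _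
  have hbddB : BddBelow (Set.range fun i : Fin m => ∑ j, M i j * q j) := Finite.bddBelow_range _
  have hPle : (∑ i, ∑ j, p i * M i j * q j) ≤ ⨆ j : Fin n, ∑ i, p i * M i j := by
    have : (∑ i, ∑ j, p i * M i j * q j) = ∑ j, (∑ i, p i * M i j) * q j := by
      rw [Finset.sum_comm]
      simp [Finset.sum_mul]
    rw [this]
    calc ∑ j, (∑ i, p i * M i j) * q j
        ≤ ∑ j, (⨆ j' : Fin n, ∑ i, p i * M i j') * q j := by
          refine Finset.sum_le_sum fun j _ => ?_
          exact mul_le_mul_of_nonneg_right (le_ciSup hbddA j) (hqnn j)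
      _ = ⨆ j : Fin n, ∑ i, p i * M i j := by
          rw [← Finset.mul_sum, hqsum, mul_one]
  have hPge : (⨅ i : Fin m, ∑ j, M i j * q j) ≤ ∑ i, ∑ j, p i * M i j * q j := by
    have : (∑ i, ∑ j, p i * M i j * q j) = ∑ i, p i * ∑ j, M i j * q j := by
      simp [Finset.mul_sum, mul_assoc]
    rw [this]
    calc (⨅ i : Fin m, ∑ j, M i j * q j)
        = ∑ i, p i * ⨅ i' : Fin m, ∑ j, M i' j * q j := by
          rw [← Finset.sum_mul, hpsum, one_mul]
      _ ≤ ∑ i, p i * ∑ j, M i j * q j := by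
          refine Finset.sum_le_sum fun i _ => ?_
          exact mul_le_mul_of_nonneg_left (ciInf_le hbddB i) (hpnn i)
  exact ⟨hpnn, hpsum, hqnn, hqsum, hmain, by linarith, by linarith⟩
end

section
/- Let n ≥ 2 and 2 ≤ k ≤ n, and let x ∈ ℝⁿ be the vector with xᵢ = 1 for i < k, x_k = 0, and xᵢ = −1 for i > k (the k-th row of the matrix S). Let z₁,…,zₙ be i.i.d. random variables uniformly distributed on [−1/2, 1/2]. Then almost surely there is a unique index maximizing xᵢ + zᵢ; letting I denote this random index, E[I] = k/2. -/
open MeasureTheory ProbabilityTheory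

noncomputable def μu : Measure ℝ := volume.restrict (Set.Icc (-(1/2) : ℝ) (1/2))

instance : IsProbabilityMeasure μu := by
  constructor
  rw [μu, Measure.restrict_apply MeasurableSet.univ, Set.univ_inter, Real.volume_Icc]
  norm_num

lemma μu_singleton (a : ℝ) : μu {a} = 0 :=
  le_antisymm (le_trans (Measure.restrict_le_self _) (by simp)) zero_le

lemma μu_compl_Ioo : μu (Set.Ioo (-(1/2) : ℝ) (1/2))ᶜ = 0 := by
  rw [μu, Measure.restrict_apply (measurableSet_Ioo.compl)]
  have hsub : (Set.Ioo (-(1/2) : ℝ) (1/2))ᶜ ∩ Set.Icc (-(1/2)) (1/2)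
      ⊆ ({-(1/2), 1/2} : Set ℝ) := by
    intro t ht
    obtain ⟨hni, ⟨h1, h2⟩⟩ := ht
    rw [Set.mem_compl_iff, Set.mem_Ioo, not_and_or, not_lt, not_lt] at hni
    rcases hni with h | h
    · exact Or.inl (le_antisymm h h1)
    · exact Or.inr (le_antisymm h2 h)
  exact measure_mono_null hsub
    ((Set.countable_insert.mpr (Set.countable_singleton (1/2 : ℝ))).measure_zero volume)

lemma map_joint {Ω : Type*} [MeasurableSpace Ω] (P : Measure Ω) [IsProbabilityMeasure P]
    (n : ℕ) (z : Fin n → Ω → ℝ) (hmeas : ∀ i, Measurable (z i))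
    (hindep : iIndepFun z P)
    (hunif : ∀ i, Measure.map (z i) P = μu) :
    Measure.map (fun ω i => z i ω) P = Measure.pi (fun _ => μu) := by
  refine (Measure.pi_eq fun s hs => ?_).symm
  rw [Measure.map_apply (measurable_pi_lambda _ fun i => hmeas i) (MeasurableSet.univ_pi hs)]
  have h1 : (fun ω i => z i ω) ⁻¹' (Set.pi Set.univ s) = ⋂ i ∈ Finset.univ, z i ⁻¹' s i := by
    ext ω; simp [Set.mem_pi]
  rw [h1, hindep.measure_inter_preimage_eq_mul Finset.univ (fun i _ => hs i)]
  refine Finset.prod_congr rfl fun i _ => ?_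
  rw [← hunif i, Measure.map_apply (hmeas i) (hs i)]

lemma pi_comp_perm (n : ℕ) (σ : Equiv.Perm (Fin n)) (B : Set (Fin n → ℝ))
    (hB : MeasurableSet B) :
    Measure.pi (fun _ : Fin n => μu) ((fun y => y ∘ σ) ⁻¹' B)
      = Measure.pi (fun _ : Fin n => μu) B := by
  have hmp := MeasureTheory.measurePreserving_piCongrLeft (fun _ : Fin n => μu) σ.symm
  have he : ⇑(MeasurableEquiv.piCongrLeft (fun _ : Fin n => ℝ) σ.symm) = fun y => y ∘ σ := by
    funext y
    funext j
    have := MeasurableEquiv.piCongrLeft_apply_apply σ.symm (β := fun _ : Fin n => ℝ) y (σ j)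
    simpa using this
  have := hmp.measure_preimage (f := (MeasurableEquiv.piCongrLeft (fun _ : Fin n => ℝ) σ.symm))
    hB.nullMeasurableSet
  rw [he] at this
  exact this

lemma pair_diff_ne {Ω : Type*} [MeasurableSpace Ω] (P : Measure Ω) [IsProbabilityMeasure P]
    (zi zj : Ω → ℝ) (hzi : Measurable zi) (hzj : Measurable zj)
    (hind : IndepFun zi zj P)
    (hui : Measure.map zi P = μu) (huj : Measure.map zj P = μu) (c : ℝ) :
    P {ω | zi ω - zj ω = c} = 0 := by
  have hmapped := (indepFun_iff_map_prod_eq_prod_map_map hzi.aemeasurable hzj.aemeasurable).mp hind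
  have hS : MeasurableSet {p : ℝ × ℝ | p.1 - p.2 = c} :=
    (measurable_fst.sub measurable_snd) (measurableSet_singleton c)
  have hpre : {ω | zi ω - zj ω = c} = (fun ω => (zi ω, zj ω)) ⁻¹' {p | p.1 - p.2 = c} := rfl
  rw [hpre, ← Measure.map_apply (hzi.prodMk hzj) hS, hmapped, hui, huj,
    Measure.prod_apply hS]
  have : ∀ a : ℝ, (Prod.mk a ⁻¹' {p : ℝ × ℝ | p.1 - p.2 = c}) = {a - c} := by
    intro a; ext b; simp [sub_eq_iff_eq_add]; constructor <;> intro h <;> linarith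
  simp only [this, μu_singleton]
  simp

/-- Let `x` be the `k`-th row of the matrix `S` (entries `1` below the diagonal position `k`,
`0` at `k`, `-1` above, in 1-based indexing) and let `z i` be i.i.d. uniform on `[-1/2, 1/2]`.
Then almost surely there is a unique index maximizing `x i + z i`, and for any such
(measurable) argmax `I`, the expected 1-based index satisfies `E[I] = k / 2`. -/
theorem expected_argmax_S_row {Ω : Type*} [MeasurableSpace Ω] (P : Measure Ω)
    [IsProbabilityMeasure P] (n k : ℕ) (hn : 2 ≤ n) (hk2 : 2 ≤ k) (hkn : k ≤ n)
    (x : Fin n → ℝ)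
    (hx : ∀ i : Fin n, x i =
      if (i : ℕ) + 1 < k then 1 else if (i : ℕ) + 1 = k then 0 else -1)
    (z : Fin n → Ω → ℝ) (hmeas : ∀ i, Measurable (z i))
    (hindep : iIndepFun z P)
    (hunif : ∀ i, Measure.map (z i) P = volume.restrict (Set.Icc (-(1/2) : ℝ) (1/2))) :
    (∀ᵐ ω ∂P, ∃! i : Fin n, ∀ j, j ≠ i → x j + z j ω < x i + z i ω) ∧
    ∀ I : Ω → Fin n, Measurable I →
      (∀ᵐ ω ∂P, ∀ j, j ≠ I ω → x j + z j ω < x (I ω) + z (I ω) ω) →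
      ∫ ω, (((I ω : ℕ) : ℝ) + 1) ∂P = k / 2 := by
  classical
  have hunif' : ∀ i, Measure.map (z i) P = μu := hunif
  have hnpos : 0 < n := by omega
  haveI : Nonempty (Fin n) := ⟨⟨0, hnpos⟩⟩
  -- pairwise distinctness a.s.
  have hdist : ∀ᵐ ω ∂P, ∀ i j : Fin n, i ≠ j → x i + z i ω ≠ x j + z j ω := by
    rw [ae_all_iff]
    intro i
    rw [ae_all_iff]
    intro j
    rcases eq_or_ne i j with rfl | hij
    · filter_upwards with ω h; exact absurd rfl h
    · have h0 : P {ω | z i ω - z j ω = x j - x i} = 0 :=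
        pair_diff_ne P (z i) (z j) (hmeas i) (hmeas j) (hindep.indepFun hij)
          (hunif' i) (hunif' j) _
      have : ∀ᵐ ω ∂P, ¬ (z i ω - z j ω = x j - x i) := by
        rw [ae_iff]; simpa using h0
      filter_upwards [this] with ω h _ heq
      exact h (by linarith)
  -- open interval a.s.
  have hopen : ∀ᵐ ω ∂P, ∀ i, z i ω ∈ Set.Ioo (-(1/2) : ℝ) (1/2) := by
    rw [ae_all_iff]
    intro i
    have h0 : P (z i ⁻¹' (Set.Ioo (-(1/2) : ℝ) (1/2))ᶜ) = 0 := by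
      rw [← Measure.map_apply (hmeas i) measurableSet_Ioo.compl, hunif' i]
      exact μu_compl_Ioo
    rw [ae_iff]
    have heq : {a | ¬ z i a ∈ Set.Ioo (-(1/2) : ℝ) (1/2)}
        = z i ⁻¹' (Set.Ioo (-(1/2) : ℝ) (1/2))ᶜ := rfl
    rw [heq]; exact h0
  -- Part 1
  have part1 : ∀ᵐ ω ∂P, ∃! i : Fin n, ∀ j, j ≠ i → x j + z j ω < x i + z i ω := by
    filter_upwards [hdist] with ω hd
    obtain ⟨i, hi⟩ := Finite.exists_max (fun i => x i + z i ω)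
    refine ⟨i, fun j hj => lt_of_le_of_ne (hi j) (hd j i hj), ?_⟩
    intro i' h'
    by_contra hne
    exact absurd (h' i (Ne.symm hne)) (not_lt.mpr (hi i'))
  refine ⟨part1, ?_⟩
  intro I hI hIae
  -- setup
  set Z : Ω → (Fin n → ℝ) := fun ω i => z i ω with hZdef
  have hZ : Measurable Z := measurable_pi_lambda _ fun i => hmeas i
  have hmap : Measure.map Z P = Measure.pi (fun _ : Fin n => μu) :=
    map_joint P n z hmeas hindep hunif'
  have hPB : ∀ B : Set (Fin n → ℝ), MeasurableSet B →
      P (Z ⁻¹' B) = Measure.pi (fun _ : Fin n => μu) B := by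
    intro B hB
    rw [← Measure.map_apply hZ hB, hmap]
  set T : Finset (Fin n) := Finset.univ.filter (fun i => (i : ℕ) + 1 < k) with hTdef
  have hmemT : ∀ i : Fin n, i ∈ T ↔ (i : ℕ) + 1 < k := by
    intro i; simp [hTdef]
  have hxT : ∀ i ∈ T, x i = 1 := by
    intro i hi; rw [hx i, if_pos ((hmemT i).mp hi)]
  have hxnT : ∀ i : Fin n, i ∉ T → x i ≤ 0 := by
    intro i hi
    rw [hx i, if_neg (fun h => hi ((hmemT i).mpr h))]
    split <;> norm_num
  have h0T : (⟨0, hnpos⟩ : Fin n) ∈ T := (hmemT _).mpr (by show 0 + 1 < k; omega)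
  have hTcard : T.card = k - 1 := by
    have ha : k - 1 < n := by omega
    have : T = Finset.Iio (⟨k - 1, ha⟩ : Fin n) := by
      ext i
      simp only [hTdef, Finset.mem_filter, Finset.mem_univ, true_and, Finset.mem_Iio]
      rw [Fin.lt_def]
      simp only []
      omega
    rw [this, Fin.card_Iio]
  -- events
  set A : Fin n → Set Ω := fun i => {ω | ∀ j ∈ T, j ≠ i → z j ω < z i ω} with hAdef
  set B : Fin n → Set (Fin n → ℝ) := fun i => {y | ∀ j ∈ T, j ≠ i → y j < y i} with hBdef
  have hBmeas : ∀ i, MeasurableSet (B i) := by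
    intro i
    have : B i = ⋂ j ∈ T, ⋂ (_ : j ≠ i), {y : Fin n → ℝ | y j < y i} := by
      ext y; simp [hBdef]
    rw [this]
    refine Set.Finite.measurableSet_biInter (Set.toFinite _) fun j _ => ?_
    exact MeasurableSet.iInter fun _ =>
      measurableSet_lt (measurable_pi_apply j) (measurable_pi_apply i)
  have hApre : ∀ i, A i = Z ⁻¹' (B i) := by
    intro i; ext ω; simp [hAdef, hBdef, hZdef]
  have hAmeas : ∀ i, MeasurableSet (A i) := fun i => (hApre i) ▸ hZ (hBmeas i)
  have hPA : ∀ i, P (A i) = Measure.pi (fun _ : Fin n => μu) (B i) := by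
    intro i; rw [hApre i]; exact hPB (B i) (hBmeas i)
  -- symmetry : equal probabilities on T
  have hAeq : ∀ i ∈ T, ∀ i' ∈ T, P (A i) = P (A i') := by
    intro i hiT i' hi'T
    rcases eq_or_ne i i' with rfl | hne
    · rfl
    rw [hPA i, hPA i']
    set σ : Equiv.Perm (Fin n) := Equiv.swap i i' with hσdef
    have hσT : ∀ j ∈ T, σ j ∈ T := by
      intro j hj
      rcases eq_or_ne j i with rfl | h1
      · simpa [hσdef, Equiv.swap_apply_left] using hi'T
      rcases eq_or_ne j i' with rfl | h2
      · simpa [hσdef, Equiv.swap_apply_right] using hiT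
      · simpa [hσdef, Equiv.swap_apply_of_ne_of_ne h1 h2] using hj
    have hσσ : ∀ j, σ (σ j) = j := fun j => Equiv.swap_apply_self i i' j
    have hσi : σ i = i' := Equiv.swap_apply_left i i'
    have hσi' : σ i' = i := Equiv.swap_apply_right i i'
    have hpre : (fun y : Fin n → ℝ => y ∘ σ) ⁻¹' (B i) = B i' := by
      ext y
      simp only [Set.mem_preimage, hBdef, Set.mem_setOf_eq, Function.comp_apply]
      constructor
      · intro h j' hj' hne'
        have hj : σ j' ∈ T := hσT j' hj'
        have : σ j' ≠ i := by
          intro hcon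
          apply hne'
          have := congrArg σ hcon
          rwa [hσσ, hσi] at this
        have := h (σ j') hj this
        rwa [hσσ, hσi] at this
      · intro h j hj hne'
        have hjT : σ j ∈ T := hσT j hj
        have hσjne : σ j ≠ i' := by
          intro hcon
          apply hne'
          have := congrArg σ hcon
          rwa [hσσ, hσi'] at this
        rw [hσi]
        exact h (σ j) hjT hσjne
    rw [← hpre, pi_comp_perm n σ (B i) (hBmeas i)]
  -- disjointness
  have hdisj : (↑T : Set (Fin n)).PairwiseDisjoint A := by
    intro i hi i' hi' hne
    refine Set.disjoint_left.mpr fun ω hωi hωi' => ?_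
    have h1 := hωi i' (by exact hi') hne.symm
    have h2 := hωi' i (by exact hi) hne
    exact absurd h1 (not_lt.mpr (le_of_lt h2))
  -- a.s. the argmax is in T and in A (I ω)
  have hTargmax : ∀ᵐ ω ∂P, I ω ∈ T ∧ ω ∈ A (I ω) := by
    filter_upwards [hopen, hIae] with ω hop hm
    have hITmem : I ω ∈ T := by
      by_contra hnot
      have hx0 : x (⟨0, hnpos⟩ : Fin n) = 1 := hxT _ h0T
      rcases eq_or_ne (⟨0, hnpos⟩ : Fin n) (I ω) with heq | hne
      · exact hnot (heq ▸ h0T)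
      · have hlt := hm _ hne
        have h1 := (hop (⟨0, hnpos⟩ : Fin n)).1
        have h2 := (hop (I ω)).2
        have h3 := hxnT _ hnot
        rw [hx0] at hlt
        linarith
    refine ⟨hITmem, fun j hj hne => ?_⟩
    have hlt := hm j hne
    rw [hxT j hj, hxT _ hITmem] at hlt
    linarith
  -- sum of probabilities is 1
  have hsum1 : ∑ i ∈ T, P (A i) = 1 := by
    rw [← measure_biUnion_finset hdisj (fun i _ => hAmeas i)]
    have hsub : ∀ᵐ ω ∂P, ω ∈ ⋃ i ∈ T, A i := by
      filter_upwards [hTargmax] with ω ⟨h1, h2⟩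
      exact Set.mem_biUnion h1 h2
    have : (⋃ i ∈ T, A i) =ᵐ[P] (Set.univ : Set Ω) := by
      rw [Filter.eventuallyEq_set]
      filter_upwards [hsub] with ω h
      simp [h]
    rw [measure_congr this, measure_univ]
  -- each probability
  have hTne : T.Nonempty := ⟨_, h0T⟩
  have hcardpos : 0 < (k - 1 : ℕ) := by omega
  have hPAval : ∀ i ∈ T, (P (A i)).toReal = 1 / (k - 1 : ℝ) := by
    intro i hi
    have hksub : ((k - 1 : ℕ) : ℝ) = (k : ℝ) - 1 := by
      push_cast [Nat.cast_sub (by omega : 1 ≤ k)]; ring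
    have hsumR : ∑ j ∈ T, (P (A j)).toReal = 1 := by
      rw [← ENNReal.toReal_sum (fun j _ => measure_ne_top P (A j)), hsum1, ENNReal.toReal_one]
    have hconst : ∀ j ∈ T, (P (A j)).toReal = (P (A i)).toReal := by
      intro j hj; rw [hAeq j hj i hi]
    rw [Finset.sum_congr rfl hconst, Finset.sum_const, hTcard, nsmul_eq_mul] at hsumR
    have hne' : (k : ℝ) - 1 ≠ 0 := by
      have : (2 : ℝ) ≤ (k : ℝ) := by exact_mod_cast hk2
      linarith
    rw [hksub] at hsumR
    rw [eq_div_iff hne']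
    linarith [hsumR]
  -- P(I = i)
  have hPI : ∀ i : Fin n, (P (I ⁻¹' {i})).toReal
      = if i ∈ T then 1 / (k - 1 : ℝ) else 0 := by
    intro i
    by_cases hi : i ∈ T
    · rw [if_pos hi, ← hPAval i hi]
      congr 1
      apply measure_congr
      rw [Filter.eventuallyEq_set]
      filter_upwards [hTargmax] with ω ⟨h1, h2⟩
      simp only [Set.mem_preimage, Set.mem_singleton_iff]
      constructor
      · rintro rfl; exact h2
      · intro hA
        by_contra hne
        have ha := hA (I ω) h1 hne
        have hb := h2 i hi (Ne.symm hne)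
        exact absurd ha (not_lt.mpr (le_of_lt hb))
    · rw [if_neg hi]
      have : (I ⁻¹' {i}) =ᵐ[P] (∅ : Set Ω) := by
        rw [Filter.eventuallyEq_set]
        filter_upwards [hTargmax] with ω ⟨h1, _⟩
        simp only [Set.mem_preimage, Set.mem_singleton_iff, Set.mem_empty_iff_false, iff_false]
        rintro rfl; exact hi h1
      rw [measure_congr this, measure_empty, ENNReal.toReal_zero]
  -- integral computation
  have hint : ∫ ω, (((I ω : ℕ) : ℝ) + 1) ∂P
      = ∑ i : Fin n, (((i : ℕ) : ℝ) + 1) * (P (I ⁻¹' {i})).toReal := by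
    have hfun : ∀ ω, (((I ω : ℕ) : ℝ) + 1)
        = ∑ i : Fin n, Set.indicator (I ⁻¹' {i}) (fun _ => ((i : ℕ) : ℝ) + 1) ω := by
      intro ω
      have hrep : ∀ i : Fin n, Set.indicator (I ⁻¹' {i}) (fun _ => ((i : ℕ) : ℝ) + 1) ω
          = if I ω = i then ((i : ℕ) : ℝ) + 1 else 0 := by
        intro i
        rw [Set.indicator_apply]
        simp only [Set.mem_preimage, Set.mem_singleton_iff]
      rw [Finset.sum_congr rfl fun i _ => hrep i,
        Finset.sum_ite_eq Finset.univ (I ω) (fun i : Fin n => ((i : ℕ) : ℝ) + 1)]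
      simp
    have hImeas : ∀ i : Fin n, MeasurableSet (I ⁻¹' {i}) := fun i =>
      hI (measurableSet_singleton i)
    rw [integral_congr_ae (Filter.Eventually.of_forall hfun)]
    rw [integral_finset_sum _ (fun (i : Fin n) _ =>
      (integrable_const (((i : ℕ) : ℝ) + 1)).indicator (hImeas i))]
    refine Finset.sum_congr rfl fun i _ => ?_
    rw [integral_indicator_const _ (hImeas i)]
    rw [smul_eq_mul, mul_comm]
    rfl
  rw [hint]
  -- final summation
  have hstep : ∑ i : Fin n, (((i : ℕ) : ℝ) + 1) * (P (I ⁻¹' {i})).toReal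
      = (∑ m ∈ Finset.range (k - 1), ((m : ℝ) + 1)) / (k - 1 : ℝ) := by
    rw [Finset.sum_congr rfl (fun i _ => by rw [hPI i])]
    have : ∀ i : Fin n, (((i : ℕ) : ℝ) + 1) * (if i ∈ T then 1 / (k - 1 : ℝ) else 0)
        = if (i : ℕ) + 1 < k then ((((i : ℕ) : ℝ) + 1) / (k - 1 : ℝ)) else 0 := by
      intro i
      by_cases h : (i : ℕ) + 1 < k
      · rw [if_pos ((hmemT i).mpr h), if_pos h]; ring
      · rw [if_neg (fun hc => h ((hmemT i).mp hc)), if_neg h]; ring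
    rw [Finset.sum_congr rfl (fun i _ => this i)]
    rw [Fin.sum_univ_eq_sum_range (fun m => if m + 1 < k then (((m : ℕ) : ℝ) + 1) / (k - 1 : ℝ) else 0) n]
    rw [← Finset.sum_filter]
    have hfil : (Finset.range n).filter (fun m => m + 1 < k) = Finset.range (k - 1) := by
      ext m; simp only [Finset.mem_filter, Finset.mem_range]; omega
    rw [hfil, Finset.sum_div]
  rw [hstep]
  have hgauss : (∑ m ∈ Finset.range (k - 1), ((m : ℝ) + 1)) = (k - 1 : ℝ) * k / 2 := by
    have h1 : (∑ m ∈ Finset.range (k - 1), (m + 1 : ℕ)) = ∑ i ∈ Finset.range k, i := by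
      have hk1 : k - 1 + 1 = k := by omega
      conv_rhs => rw [← hk1]
      rw [Finset.sum_range_succ' (fun i => i) (k - 1)]
      simp
    have h2 : (∑ i ∈ Finset.range k, i) * 2 = k * (k - 1) := Finset.sum_range_id_mul_two k
    have h3 : (∑ m ∈ Finset.range (k - 1), ((m : ℝ) + 1))
        = ((∑ m ∈ Finset.range (k - 1), (m + 1 : ℕ) : ℕ) : ℝ) := by
      push_cast
      rfl
    rw [h3, h1]
    have h4 : ((∑ i ∈ Finset.range k, i : ℕ) : ℝ) * 2 = (k : ℝ) * ((k : ℝ) - 1) := by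
      rw [← Nat.cast_ofNat, ← Nat.cast_mul, h2]
      push_cast [Nat.cast_sub (by omega : 1 ≤ k)]
      ring
    linarith
  rw [hgauss]
  have hkne : (k : ℝ) - 1 ≠ 0 := by
    have : (2 : ℝ) ≤ (k : ℝ) := by exact_mod_cast hk2
    linarith
  field_simp
end

section
/- Let n ≥ 2 and 2 ≤ k ≤ n, and let x ∈ ℝⁿ be the vector with xᵢ = −1 for i < k, x_k = 0, and xᵢ = 1 for i > k (the k-th column of the matrix S). Let z₁,…,zₙ be i.i.d. random variables uniformly distributed on [−1/2, 1/2]. Then almost surely there is a unique index minimizing xᵢ − zᵢ; letting I denote this random index, I is uniformly distributed on {1,…,k−1} and E[I] = k/2. -/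
open MeasureTheory ProbabilityTheory


noncomputable abbrev unifM : Measure ℝ := volume.restrict (Set.Icc (-(1/2) : ℝ) (1/2))

instance : IsProbabilityMeasure unifM := by
  constructor
  rw [Measure.restrict_apply_univ, Real.volume_Icc]
  norm_num

lemma unifM_prod_sub (c : ℝ) : (unifM.prod unifM) {p : ℝ × ℝ | p.1 - p.2 = c} = 0 := by
  have hs : MeasurableSet {p : ℝ × ℝ | p.1 - p.2 = c} :=
    (measurable_fst.sub measurable_snd) (measurableSet_singleton c)
  rw [Measure.prod_apply hs]
  have : ∀ x : ℝ, unifM (Prod.mk x ⁻¹' {p : ℝ × ℝ | p.1 - p.2 = c}) = 0 := by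
    intro x
    have : Prod.mk x ⁻¹' {p : ℝ × ℝ | p.1 - p.2 = c} = {x - c} := by
      ext y; simp [Set.mem_preimage]; constructor <;> intro h <;> linarith
    rw [this]
    exact measure_singleton _
  exact (lintegral_congr this).trans lintegral_zero

lemma pair_sub_null {Ω : Type*} [MeasurableSpace Ω] (P : Measure Ω) [IsProbabilityMeasure P]
    (f g : Ω → ℝ) (hf : Measurable f) (hg : Measurable g) (hfg : IndepFun f g P)
    (hf' : P.map f = unifM) (hg' : P.map g = unifM) (c : ℝ) :
    P {ω | f ω - g ω = c} = 0 := by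
  have hmap : P.map (fun ω => (f ω, g ω)) = unifM.prod unifM := by
    rw [(indepFun_iff_map_prod_eq_prod_map_map hf.aemeasurable hg.aemeasurable).1 hfg, hf', hg']
  have hs : MeasurableSet {p : ℝ × ℝ | p.1 - p.2 = c} :=
    (measurable_fst.sub measurable_snd) (measurableSet_singleton c)
  have : {ω | f ω - g ω = c} = (fun ω => (f ω, g ω)) ⁻¹' {p : ℝ × ℝ | p.1 - p.2 = c} := rfl
  rw [this, ← Measure.map_apply (hf.prodMk hg) hs, hmap, unifM_prod_sub]

def blockSet (n m : ℕ) (i : Fin n) : Set (Fin n → ℝ) :=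
  {v | ∀ j : Fin n, (j : ℕ) < m → j ≠ i → v j < v i}

lemma blockSet_meas (n m : ℕ) (i : Fin n) : MeasurableSet (blockSet n m i) := by
  have : blockSet n m i = ⋂ j : Fin n, ⋂ (_ : (j:ℕ) < m) (_ : j ≠ i),
      {v : Fin n → ℝ | v j < v i} := by
    ext v; simp [blockSet]
  rw [this]
  exact MeasurableSet.iInter fun j => MeasurableSet.iInter fun _ => MeasurableSet.iInter fun _ =>
    measurableSet_lt (measurable_pi_apply j) (measurable_pi_apply i)

lemma blockSet_swap_measure {n m : ℕ} (i i' : Fin n) (hi : (i:ℕ) < m) (hi' : (i':ℕ) < m) :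
    Measure.pi (fun _ : Fin n => unifM) (blockSet n m i)
      = Measure.pi (fun _ : Fin n => unifM) (blockSet n m i') := by
  set ν := Measure.pi (fun _ : Fin n => unifM) with hν
  let σ : Fin n ≃ Fin n := Equiv.swap i i'
  let T := MeasurableEquiv.piCongrLeft (fun _ : Fin n => ℝ) σ
  have hmp : MeasurePreserving T ν ν := measurePreserving_piCongrLeft (fun _ => unifM) σ
  have hT : ∀ v : Fin n → ℝ, ∀ j : Fin n, T v j = v (σ j) := by
    intro v j
    have h1 := MeasurableEquiv.piCongrLeft_apply_apply (β := fun _ : Fin n => ℝ) σ v (σ j)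
    simpa [T, σ, Equiv.swap_apply_self] using h1
  have hpre : T ⁻¹' (blockSet n m i) = blockSet n m i' := by
    ext v
    simp only [Set.mem_preimage, blockSet, Set.mem_setOf_eq]
    constructor
    · intro h j hj hji'
      have h1 : (σ j : ℕ) < m := by
        rcases Equiv.swap_apply_def i i' j with _
        by_cases h2 : j = i
        · simpa [σ, h2] using hi'
        · by_cases h3 : j = i'
          · simpa [σ, h3] using hi
          · simpa [σ, Equiv.swap_apply_of_ne_of_ne h2 h3] using hj
      have h2 : σ j ≠ i := by
        intro hc
        apply hji'
        have := congrArg σ hc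
        simpa [σ, Equiv.swap_apply_self, Equiv.swap_apply_left] using this
      have := h (σ j) h1 h2
      rw [hT, hT] at this
      simpa [σ, Equiv.swap_apply_self, Equiv.swap_apply_left] using this
    · intro h j hj hji
      rw [hT, hT]
      have hσi : σ i = i' := Equiv.swap_apply_left i i'
      rw [hσi]
      have h1 : (σ j : ℕ) < m := by
        by_cases h2 : j = i
        · simpa [σ, h2] using hi'
        · by_cases h3 : j = i'
          · simpa [σ, h3] using hi
          · simpa [σ, Equiv.swap_apply_of_ne_of_ne h2 h3] using hj
      have h2 : σ j ≠ i' := by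
        intro hc
        apply hji
        have := congrArg σ hc
        simpa [σ, Equiv.swap_apply_self, Equiv.swap_apply_left] using this
      exact h (σ j) h1 h2
  calc ν (blockSet n m i) = ν.map T (blockSet n m i) := by rw [hmp.map_eq]
    _ = ν (T ⁻¹' blockSet n m i) := by
        rw [Measure.map_apply hmp.measurable (blockSet_meas n m i)]
    _ = ν (blockSet n m i') := by rw [hpre]

/-- Let `x` be the `k`-th column of the matrix `S` (entries `-1` before the `k`-th position,
`0` at `k`, `1` after, in 1-based indexing) and let `z i` be i.i.d. uniform on `[-1/2, 1/2]`.
Then almost surely there is a unique index minimizing `x i - z i`; this random index `I` is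
uniformly distributed on the first `k - 1` (1-based) indices, and `E[I] = k / 2`. -/
theorem argmin_S_col_uniform {Ω : Type*} [MeasurableSpace Ω] (P : Measure Ω)
    [IsProbabilityMeasure P] (n k : ℕ) (hn : 2 ≤ n) (hk2 : 2 ≤ k) (hkn : k ≤ n)
    (x : Fin n → ℝ)
    (hx : ∀ i : Fin n, x i =
      if (i : ℕ) + 1 < k then -1 else if (i : ℕ) + 1 = k then 0 else 1)
    (z : Fin n → Ω → ℝ) (hmeas : ∀ i, Measurable (z i))
    (hindep : iIndepFun z P)
    (hunif : ∀ i, Measure.map (z i) P = volume.restrict (Set.Icc (-(1/2) : ℝ) (1/2))) :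
    (∀ᵐ ω ∂P, ∃! i : Fin n, ∀ j, j ≠ i → x i - z i ω < x j - z j ω) ∧
    ∀ I : Ω → Fin n, Measurable I →
      (∀ᵐ ω ∂P, ∀ j, j ≠ I ω → x (I ω) - z (I ω) ω < x j - z j ω) →
      ((∀ i : Fin n, (i : ℕ) + 1 ≤ k - 1 →
          P {ω | I ω = i} = ENNReal.ofReal (1 / ((k : ℝ) - 1))) ∧
       (∀ i : Fin n, k ≤ (i : ℕ) + 1 → P {ω | I ω = i} = 0) ∧
       ∫ ω, (((I ω : ℕ) : ℝ) + 1) ∂P = k / 2) := by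
  set m := k - 1 with hm
  have hm1 : 1 ≤ m := by omega
  have hmn : m < n := by omega
  -- x values
  have hxneg : ∀ i : Fin n, (i : ℕ) < m → x i = -1 := by
    intro i hi; rw [hx i, if_pos (by omega)]
  have hxzero : ∀ i : Fin n, (i : ℕ) = m → x i = 0 := by
    intro i hi; rw [hx i, if_neg (by omega), if_pos (by omega)]
  have hxpos : ∀ i : Fin n, m < (i : ℕ) → x i = 1 := by
    intro i hi; rw [hx i, if_neg (by omega), if_neg (by omega)]
  -- the joint law is the product of uniforms
  have hZmeas : Measurable (fun ω (j : Fin n) => z j ω) :=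
    measurable_pi_lambda _ hmeas
  have hmap : P.map (fun ω (j : Fin n) => z j ω) = Measure.pi (fun _ : Fin n => unifM) := by
    refine (Measure.pi_eq (μ := fun _ : Fin n => unifM) fun s hs => ?_).symm
    rw [Measure.map_apply hZmeas (MeasurableSet.univ_pi hs)]
    have hpre : (fun ω (j : Fin n) => z j ω) ⁻¹' Set.pi Set.univ s
        = ⋂ j ∈ Finset.univ, z j ⁻¹' s j := by
      ext ω; simp [Set.mem_pi]
    rw [hpre, hindep.measure_inter_preimage_eq_mul Finset.univ (fun i _ => hs i)]
    refine Finset.prod_congr rfl fun j _ => ?_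
    rw [← Measure.map_apply (hmeas j) (hs j), hunif j]
  -- the good event
  have hG : ∀ᵐ ω ∂P, (∀ i : Fin n, z i ω ∈ Set.Icc (-(1/2) : ℝ) (1/2)) ∧
      (∀ i j : Fin n, i ≠ j →
        z i ω - z j ω ≠ 0 ∧ z i ω - z j ω ≠ 1 ∧ z i ω - z j ω ≠ 2) := by
    refine Filter.Eventually.and ?_ ?_
    · rw [ae_all_iff]
      intro i
      have h1 : P (z i ⁻¹' Set.Icc (-(1/2) : ℝ) (1/2)) = 1 := by
        rw [← Measure.map_apply (hmeas i) measurableSet_Icc, hunif i,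
          Measure.restrict_apply measurableSet_Icc, Set.inter_self, Real.volume_Icc]
        norm_num
      have h2 : P (z i ⁻¹' Set.Icc (-(1/2) : ℝ) (1/2))ᶜ = 0 := by
        rw [measure_compl ((hmeas i) measurableSet_Icc) (measure_ne_top _ _), h1, measure_univ,
          tsub_self]
      rw [ae_iff]
      convert h2 using 2
      rfl
    · rw [ae_all_iff]
      intro i
      rw [ae_all_iff]
      intro j
      by_cases hij : i = j
      · exact ae_of_all _ fun ω h => absurd hij h
      · have key0 : ∀ c : ℝ, ∀ᵐ ω ∂P, z i ω - z j ω ≠ c := by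
          intro c
          have h0 := pair_sub_null P (z i) (z j) (hmeas i) (hmeas j)
            (hindep.indepFun hij) (hunif i) (hunif j) c
          rw [ae_iff]
          convert h0 using 2
          simp
        filter_upwards [key0 0, key0 1, key0 2] with ω h0 h1 h2 _
        exact ⟨h0, h1, h2⟩
  -- key equivalence: being the strict argmin (for a block index) = being the strict max of z
  have key : ∀ ω, ((∀ i : Fin n, z i ω ∈ Set.Icc (-(1/2) : ℝ) (1/2)) ∧
      (∀ i j : Fin n, i ≠ j →
        z i ω - z j ω ≠ 0 ∧ z i ω - z j ω ≠ 1 ∧ z i ω - z j ω ≠ 2)) →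
      ∀ i : Fin n, (i : ℕ) < m →
      ((∀ j, j ≠ i → x i - z i ω < x j - z j ω) ↔
        (∀ j : Fin n, (j : ℕ) < m → j ≠ i → z j ω < z i ω)) := by
    intro ω hω i hi
    obtain ⟨hrange, hdiff⟩ := hω
    constructor
    · intro h j hj hji
      have h1 := h j hji
      rw [hxneg i hi, hxneg j hj] at h1
      linarith
    · intro h j hji
      rcases lt_trichotomy ((j : ℕ)) m with hj | hj | hj
      · have h1 := h j hj hji
        rw [hxneg i hi, hxneg j hj]
        linarith
      · rw [hxneg i hi, hxzero j hj]
        have h1 := (hrange j).2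
        have h2 := (hrange i).1
        have h3 := (hdiff j i hji).2.1
        have h4 : z j ω - z i ω ≤ 1 := by linarith
        have h5 : z j ω - z i ω < 1 := lt_of_le_of_ne h4 h3
        linarith
      · rw [hxneg i hi, hxpos j hj]
        have h1 := (hrange j).2
        have h2 := (hrange i).1
        linarith
  -- any strict argmin lies in the block
  have hblk : ∀ ω, ((∀ i : Fin n, z i ω ∈ Set.Icc (-(1/2) : ℝ) (1/2)) ∧
      (∀ i j : Fin n, i ≠ j →
        z i ω - z j ω ≠ 0 ∧ z i ω - z j ω ≠ 1 ∧ z i ω - z j ω ≠ 2)) →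
      ∀ i : Fin n, (∀ j, j ≠ i → x i - z i ω < x j - z j ω) → (i : ℕ) < m := by
    intro ω hω i hargmin
    by_contra hc
    push_neg at hc
    set j0 : Fin n := ⟨0, by omega⟩ with hj0
    have hj0i : j0 ≠ i := by
      intro hj
      have : (j0 : ℕ) = (i : ℕ) := by rw [hj]
      simp [hj0] at this
      omega
    have h1 := hargmin j0 hj0i
    rw [hxneg j0 (by simp [hj0]; omega)] at h1
    have h2 := (hω.1 j0).1
    rcases eq_or_lt_of_le hc with hmi | hmi
    · rw [hxzero i hmi.symm] at h1
      have h3 := (hω.1 i).2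
      linarith
    · rw [hxpos i hmi] at h1
      have h3 := (hω.1 i).2
      linarith
  -- existence of a strict max of z in the block
  have hexmax : ∀ ω, ((∀ i : Fin n, z i ω ∈ Set.Icc (-(1/2) : ℝ) (1/2)) ∧
      (∀ i j : Fin n, i ≠ j →
        z i ω - z j ω ≠ 0 ∧ z i ω - z j ω ≠ 1 ∧ z i ω - z j ω ≠ 2)) →
      ∃ i : Fin n, (i : ℕ) < m ∧ ∀ j : Fin n, (j : ℕ) < m → j ≠ i → z j ω < z i ω := by
    intro ω hω
    obtain ⟨i, hi, hmax⟩ := Finset.exists_max_image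
      (Finset.univ.filter fun i : Fin n => (i : ℕ) < m) (fun i => z i ω)
      ⟨⟨0, by omega⟩, by simp; omega⟩
    simp only [Finset.mem_filter, Finset.mem_univ, true_and] at hi
    refine ⟨i, hi, fun j hj hji => ?_⟩
    have hle := hmax j (by simp [hj])
    rcases lt_or_eq_of_le hle with h | h
    · exact h
    · exact absurd (by linarith [h] : z j ω - z i ω = 0) (hω.2 j i hji).1
  -- uniqueness given two argmins
  have huniq : ∀ ω, ∀ i i' : Fin n, (∀ j, j ≠ i → x i - z i ω < x j - z j ω) →
      (∀ j, j ≠ i' → x i' - z i' ω < x j - z j ω) → i' = i := by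
    intro ω i i' h h'
    by_contra hne
    have h1 := h i' hne
    have h2 := h' i (fun hc => hne hc.symm)
    linarith
  constructor
  · filter_upwards [hG] with ω hω
    obtain ⟨i, hi, hmax⟩ := hexmax ω hω
    exact ⟨i, (key ω hω i hi).2 hmax, fun i' hi' => huniq ω i i' ((key ω hω i hi).2 hmax) hi'⟩
  -- Part 2
  intro I hImeas hIae
  set E : Fin n → Set Ω := fun i => {ω | ∀ j : Fin n, (j : ℕ) < m → j ≠ i → z j ω < z i ω}
    with hE
  have hEpre : ∀ i, E i = (fun ω (j : Fin n) => z j ω) ⁻¹' blockSet n m i := fun i => rfl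
  have hEmeas : ∀ i, MeasurableSet (E i) := by
    intro i; rw [hEpre]; exact hZmeas (blockSet_meas n m i)
  have hEP : ∀ i, P (E i) = Measure.pi (fun _ : Fin n => unifM) (blockSet n m i) := by
    intro i
    rw [hEpre, ← Measure.map_apply hZmeas (blockSet_meas n m i), hmap]
  set i0 : Fin n := ⟨0, by omega⟩ with hi0
  have hi0m : (i0 : ℕ) < m := by simp [hi0]; omega
  have hEeq : ∀ i : Fin n, (i : ℕ) < m → P (E i) = P (E i0) := by
    intro i hi
    rw [hEP, hEP, blockSet_swap_measure i i0 hi hi0m]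
  -- the block finset
  set B : Finset (Fin n) := Finset.univ.filter (fun i : Fin n => (i : ℕ) < m) with hB
  have hBcard : B.card = m := by
    rw [← Finset.card_range m]
    apply Finset.card_bij (fun (a : Fin n) _ => (a : ℕ))
    · intro a ha
      simp only [hB, Finset.mem_filter, Finset.mem_univ, true_and] at ha
      simpa using ha
    · intro a ha a' ha' h
      exact Fin.val_injective h
    · intro b hb
      simp only [Finset.mem_range] at hb
      exact ⟨⟨b, by omega⟩, by simp [hB]; omega, rfl⟩
  -- disjointness and covering
  have hdisj : Set.PairwiseDisjoint (B : Set (Fin n)) E := by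
    intro i hi j hj hij
    simp only [Finset.coe_filter, Finset.mem_univ, true_and, Set.mem_setOf_eq, hB] at hi hj
    refine Set.disjoint_left.2 fun ω hωi hωj => ?_
    have h1 := hωi j hj hij.symm
    have h2 := hωj i hi hij
    linarith
  have hcover : P (⋃ i ∈ B, E i) = 1 := by
    have hae : ∀ᵐ ω ∂P, ω ∈ ⋃ i ∈ B, E i := by
      filter_upwards [hG] with ω hω
      obtain ⟨i, hi, hmax⟩ := hexmax ω hω
      refine Set.mem_iUnion₂.2 ⟨i, ?_, hmax⟩
      simp only [hB, Finset.mem_filter, Finset.mem_univ, true_and]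
      exact hi
    rw [← measure_univ (μ := P)]
    apply measure_congr
    exact MeasureTheory.ae_eq_univ.2 (by rwa [ae_iff] at hae; )
  have hsum : ∑ i ∈ B, P (E i) = 1 := by
    rw [← measure_biUnion_finset hdisj (fun i _ => hEmeas i), hcover]
  have hconst : (m : ENNReal) * P (E i0) = 1 := by
    have : ∑ i ∈ B, P (E i) = ∑ _i ∈ B, P (E i0) := by
      refine Finset.sum_congr rfl fun i hi => ?_
      simp only [hB, Finset.mem_filter, Finset.mem_univ, true_and] at hi
      exact hEeq i hi
    rw [this, Finset.sum_const, hBcard, nsmul_eq_mul] at hsum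
    exact_mod_cast hsum
  have hEval : P (E i0) = ((m : ENNReal))⁻¹ := by
    have hm0 : (m : ENNReal) ≠ 0 := by
      simp; omega
    have hmtop : (m : ENNReal) ≠ ⊤ := ENNReal.natCast_ne_top m
    calc P (E i0) = (m : ENNReal)⁻¹ * ((m : ENNReal) * P (E i0)) := by
          rw [← mul_assoc, ENNReal.inv_mul_cancel hm0 hmtop, one_mul]
      _ = (m : ENNReal)⁻¹ := by rw [hconst, mul_one]
  -- identification of {I = i} with E i, for block indices
  have hIE : ∀ i : Fin n, (i : ℕ) < m → P {ω | I ω = i} = P (E i) := by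
    intro i hi
    apply measure_congr
    rw [Filter.eventuallyEq_set]
    filter_upwards [hG, hIae] with ω hω hIω
    constructor
    · intro hIi
      have : ∀ j, j ≠ i → x i - z i ω < x j - z j ω := by
        intro j hj
        have := hIω j (by rwa [hIi])
        rwa [hIi] at this
      exact (key ω hω i hi).1 this
    · intro hEω
      exact huniq ω i (I ω) ((key ω hω i hi).2 hEω) hIω
  -- probability for block indices
  have hPI : ∀ i : Fin n, (i : ℕ) < m → P {ω | I ω = i} = ((m : ENNReal))⁻¹ := by
    intro i hi
    rw [hIE i hi, hEeq i hi, hEval]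
  -- probability zero outside the block
  have hPI0 : ∀ i : Fin n, m ≤ (i : ℕ) → P {ω | I ω = i} = 0 := by
    intro i hi
    have hae : ∀ᵐ ω ∂P, I ω ≠ i := by
      filter_upwards [hG, hIae] with ω hω hIω
      intro hc
      have := hblk ω hω (I ω) hIω
      rw [hc] at this
      omega
    have h0 := ae_iff.1 hae
    simpa using h0
  refine ⟨?_, ?_, ?_⟩
  · intro i hi
    have hi' : (i : ℕ) < m := by omega
    rw [hPI i hi']
    have hk1 : ((k : ℝ) - 1) = (m : ℝ) := by
      rw [hm]
      push_cast [Nat.cast_sub (by omega : 1 ≤ k)]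
      ring
    rw [hk1, one_div, ← ENNReal.ofReal_natCast m, ← ENNReal.ofReal_inv_of_pos (by positivity)]
  · intro i hi
    exact hPI0 i (by omega)
  · have hmapI : ∀ i : Fin n, (P.map I) {i} = P {ω | I ω = i} := by
      intro i
      rw [Measure.map_apply hImeas (measurableSet_singleton i)]
      rfl
    haveI : IsProbabilityMeasure (P.map I) := Measure.isProbabilityMeasure_map hImeas.aemeasurable
    have hint : ∫ ω, (((I ω : ℕ) : ℝ) + 1) ∂P
        = ∑ i : Fin n, ((P.map I) {i}).toReal • (((i : ℕ) : ℝ) + 1) := by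
      rw [← integral_map hImeas.aemeasurable
        ((measurable_of_countable (fun i : Fin n => ((i : ℕ) : ℝ) + 1)).aestronglyMeasurable)]
      exact integral_fintype Integrable.of_finite
    have hterm : ∀ i : Fin n, ((P.map I) {i}).toReal • (((i : ℕ) : ℝ) + 1)
        = if (i : ℕ) < m then (((i : ℕ) : ℝ) + 1) / m else 0 := by
      intro i
      rw [hmapI]
      by_cases hi : (i : ℕ) < m
      · rw [if_pos hi, hPI i hi, smul_eq_mul, ENNReal.toReal_inv]
        simp only [ENNReal.toReal_natCast]
        ring
      · rw [if_neg hi, hPI0 i (by omega)]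
        simp
    rw [hint, Finset.sum_congr rfl (fun i _ => hterm i)]
    have h1 : ∑ i : Fin n, (if (i : ℕ) < m then (((i : ℕ) : ℝ) + 1) / m else 0)
        = ∑ j ∈ Finset.range n, (if j < m then ((j : ℝ) + 1) / m else 0) :=
      Fin.sum_univ_eq_sum_range (fun j => if j < m then ((j : ℝ) + 1) / m else 0) n
    rw [h1, ← Finset.sum_range_add_sum_Ico _ (le_of_lt hmn)]
    have h2 : ∑ j ∈ Finset.Ico m n, (if j < m then ((j : ℝ) + 1) / m else 0) = 0 := by
      apply Finset.sum_eq_zero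
      intro j hj
      rw [if_neg]
      rw [Finset.mem_Ico] at hj
      omega
    have h3 : ∑ j ∈ Finset.range m, (if j < m then ((j : ℝ) + 1) / m else 0)
        = ∑ j ∈ Finset.range m, (((j : ℝ) + 1) / m) :=
      Finset.sum_congr rfl fun j hj => if_pos (Finset.mem_range.1 hj)
    have h4 : ∀ M : ℕ, ∑ j ∈ Finset.range M, ((j : ℝ) + 1) = M * (M + 1) / 2 := by
      intro M
      induction M with
      | zero => simp
      | succ N ih =>
        rw [Finset.sum_range_succ, ih]
        push_cast
        ring
    rw [h2, h3, add_zero, ← Finset.sum_div, h4 m]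
    have hk1 : (m : ℝ) = (k : ℝ) - 1 := by
      rw [hm]
      push_cast [Nat.cast_sub (by omega : 1 ≤ k)]
      ring
    have hkne : (k : ℝ) - 1 ≠ 0 := by
      have h2k : (2 : ℝ) ≤ (k : ℝ) := by exact_mod_cast hk2
      intro hc
      linarith
    rw [hk1]
    field_simp
    ring
end

section
/- Let n ≥ 1 and let R, C ⊆ [n] be nonempty with r = min R and c = min C, and suppose r < c. Then a pair (p,q) ∈ Δ_R × Δ_C is a Nash equilibrium of the restricted game S restricted to R × C if and only if the support of p is contained in {i ∈ R : i < c}. In particular, for every i ∈ R with i < c and every q ∈ Δ_C, (e_i, q) is a Nash equilibrium of the restricted game. -/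
open Finset

/-- The matrix `S`: `S i j = 1` if `i > j`, `0` if `i = j`, `-1` if `i < j`. -/
def Smat (n : ℕ) : Matrix (Fin n) (Fin n) ℝ := fun i j =>
  if j < i then 1 else if i = j then 0 else -1

/-- `Δ_R`: probability vectors on `Fin n` with support contained in `R`. -/
def simplexOn {n : ℕ} (R : Finset (Fin n)) : Set (Fin n → ℝ) :=
  {p | (∀ i, 0 ≤ p i) ∧ (∑ i, p i = 1) ∧ ∀ i, i ∉ R → p i = 0}

/-- Bilinear payoff `pᵀ M q`. -/
def payoff {n : ℕ} (M : Matrix (Fin n) (Fin n) ℝ) (p q : Fin n → ℝ) : ℝ :=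
  ∑ i, ∑ j, p i * M i j * q j

/-- Nash equilibrium of the game `S` restricted to `R × C`
(row player minimizes, column player maximizes). -/
def IsRestrictedNE {n : ℕ} (R C : Finset (Fin n)) (p q : Fin n → ℝ) : Prop :=
  p ∈ simplexOn R ∧ q ∈ simplexOn C ∧
  (∀ p' ∈ simplexOn R, payoff (Smat n) p q ≤ payoff (Smat n) p' q) ∧
  (∀ q' ∈ simplexOn C, payoff (Smat n) p q' ≤ payoff (Smat n) p q)

lemma smat_of_lt {n : ℕ} {i j : Fin n} (h : i < j) : Smat n i j = -1 := by
  simp [Smat, not_lt_of_gt h, Fin.ne_of_lt h]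

lemma smat_ge {n : ℕ} (i j : Fin n) : -1 ≤ Smat n i j := by
  unfold Smat; split_ifs <;> norm_num

lemma single_mem_simplex {n : ℕ} (R : Finset (Fin n)) {i : Fin n} (hi : i ∈ R) :
    (Pi.single i 1 : Fin n → ℝ) ∈ simplexOn R := by
  refine ⟨fun j => ?_, ?_, fun j hj => ?_⟩
  · rw [Pi.single_apply]; split <;> norm_num
  · simp
  · have hji : j ≠ i := fun h => hj (h ▸ hi)
    simp [Pi.single_apply, hji]

lemma payoff_ge {n : ℕ} {p q : Fin n → ℝ} (hp0 : ∀ i, 0 ≤ p i) (hp1 : ∑ i, p i = 1)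
    (hq0 : ∀ i, 0 ≤ q i) (hq1 : ∑ i, q i = 1) : -1 ≤ payoff (Smat n) p q := by
  have key : ∑ i, ∑ j, -(p i * q j) ≤ payoff (Smat n) p q := by
    refine Finset.sum_le_sum fun i _ => Finset.sum_le_sum fun j _ => ?_
    have := smat_ge i j
    nlinarith [hp0 i, hq0 j, mul_nonneg (hp0 i) (hq0 j), mul_le_mul_of_nonneg_left (mul_le_mul_of_nonneg_right this (hq0 j)) (hp0 i)]
  calc (-1 : ℝ) = ∑ i, ∑ j, -(p i * q j) := by
        rw [show (∑ i, ∑ j, -(p i * q j)) = -((∑ i, p i) * (∑ j, q j)) by rw [Finset.sum_mul_sum, ← Finset.sum_neg_distrib]; exact Finset.sum_congr rfl fun i _ => by rw [← Finset.sum_neg_distrib], hp1, hq1]; norm_num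
    _ ≤ _ := key

lemma payoff_eq_neg_one {n : ℕ} {C : Finset (Fin n)} (hC : C.Nonempty) {p q : Fin n → ℝ}
    (hp1 : ∑ i, p i = 1) (hq1 : ∑ i, q i = 1) (hqC : ∀ j, j ∉ C → q j = 0)
    (hps : ∀ i, p i ≠ 0 → i < C.min' hC) : payoff (Smat n) p q = -1 := by
  have : payoff (Smat n) p q = ∑ i, ∑ j, -(p i * q j) := by
    refine Finset.sum_congr rfl fun i _ => Finset.sum_congr rfl fun j _ => ?_
    rcases eq_or_ne (p i) 0 with h | h
    · simp [h]
    rcases eq_or_ne (q j) 0 with h' | h'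
    · simp [h']
    have hjC : j ∈ C := by by_contra hc; exact h' (hqC j hc)
    have hij : i < j := lt_of_lt_of_le (hps i h) (Finset.min'_le C j hjC)
    rw [smat_of_lt hij]; ring
  rw [this]
  rw [show (∑ i, ∑ j, -(p i * q j)) = -((∑ i, p i) * (∑ j, q j)) by rw [Finset.sum_mul_sum, ← Finset.sum_neg_distrib]; exact Finset.sum_congr rfl fun i _ => by rw [← Finset.sum_neg_distrib], hp1, hq1]; norm_num

/-- If `r = min R < c = min C`, then `(p, q) ∈ Δ_R × Δ_C` is a Nash equilibrium of the game
`S` restricted to `R × C` iff the support of `p` is contained in `{i ∈ R : i < c}`.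
In particular `(e_i, q)` is such an equilibrium for every `i ∈ R` with `i < c` and
every `q ∈ Δ_C`. -/
theorem restrictedNE_S_r_lt_c {n : ℕ} (hn : 1 ≤ n) (R C : Finset (Fin n))
    (hR : R.Nonempty) (hC : C.Nonempty) (hrc : R.min' hR < C.min' hC) :
    (∀ p q, p ∈ simplexOn R → q ∈ simplexOn C →
      (IsRestrictedNE R C p q ↔ ∀ i, p i ≠ 0 → i ∈ R ∧ i < C.min' hC)) ∧
    (∀ i ∈ R, i < C.min' hC → ∀ q ∈ simplexOn C,
      IsRestrictedNE R C (Pi.single i 1) q) := by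
  set c := C.min' hC with hc
  set r := R.min' hR with hr
  have hrR : r ∈ R := R.min'_mem hR
  have hcC : c ∈ C := C.min'_mem hC
  have main : ∀ p q, p ∈ simplexOn R → q ∈ simplexOn C →
      (IsRestrictedNE R C p q ↔ ∀ i, p i ≠ 0 → i ∈ R ∧ i < c) := by
    intro p q hp hq
    obtain ⟨hp0, hp1, hpR⟩ := hp
    obtain ⟨hq0, hq1, hqC⟩ := hq
    constructor
    · rintro ⟨-, -, hrow, hcol⟩ i hi
      refine ⟨by by_contra h; exact hi (hpR i h), ?_⟩
      -- payoff p q ≤ payoff e_r q = -1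
      have her : (Pi.single r 1 : Fin n → ℝ) ∈ simplexOn R := single_mem_simplex R hrR
      have herv : payoff (Smat n) (Pi.single r 1) q = -1 := by
        refine payoff_eq_neg_one hC ?_ hq1 hqC ?_
        · simp
        · intro k hk
          have : k = r := by
            by_contra h; exact hk (by simp [Pi.single_apply, h])
          rw [this]; exact hrc
      have hle : payoff (Smat n) p q ≤ -1 := herv ▸ hrow _ her
      -- payoff p e_c ≤ payoff p q ≤ -1
      have hec : (Pi.single c 1 : Fin n → ℝ) ∈ simplexOn C := single_mem_simplex C hcC
      have hecv : payoff (Smat n) p (Pi.single c 1) = ∑ k, p k * Smat n k c := by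
        unfold payoff
        refine Finset.sum_congr rfl fun k _ => ?_
        rw [Finset.sum_eq_single c]
        · simp
        · intro b _ hb; simp [Pi.single_apply, hb]
        · simp
      have hle2 : ∑ k, p k * Smat n k c ≤ -1 := by
        rw [← hecv]; exact le_trans (hcol _ hec) hle
      have hsum : ∑ k, p k * (Smat n k c + 1) ≤ 0 := by
        have : ∑ k, p k * (Smat n k c + 1) = (∑ k, p k * Smat n k c) + ∑ k, p k := by
          rw [← Finset.sum_add_distrib]; exact Finset.sum_congr rfl fun k _ => by ring
        rw [this, hp1]; linarith
      have hterm : ∀ k ∈ Finset.univ, 0 ≤ p k * (Smat n k c + 1) := fun k _ =>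
        mul_nonneg (hp0 k) (by linarith [smat_ge k c])
      have hzero : p i * (Smat n i c + 1) = 0 := by
        have := (Finset.sum_eq_zero_iff_of_nonneg hterm).1
          (le_antisymm hsum (Finset.sum_nonneg hterm))
        exact this i (Finset.mem_univ i)
      have hS : Smat n i c = -1 := by
        rcases mul_eq_zero.1 hzero with h | h
        · exact absurd h hi
        · linarith
      by_contra hic
      push_neg at hic
      rcases lt_or_eq_of_le hic with h | h
      · norm_num [Smat, h] at hS
      · norm_num [Smat, h.symm] at hS
    · intro hs
      have hps : ∀ i, p i ≠ 0 → i < c := fun i hi => (hs i hi).2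
      have hval : payoff (Smat n) p q = -1 := payoff_eq_neg_one hC hp1 hq1 hqC hps
      refine ⟨⟨hp0, hp1, hpR⟩, ⟨hq0, hq1, hqC⟩, ?_, ?_⟩
      · intro p' hp'
        rw [hval]
        exact payoff_ge hp'.1 hp'.2.1 hq0 hq1
      · intro q' hq'
        rw [hval, payoff_eq_neg_one hC hp1 hq'.2.1 hq'.2.2 hps]
  refine ⟨main, fun i hiR hic q hq => ?_⟩
  refine (main _ q (single_mem_simplex R hiR) hq).2 fun k hk => ?_
  have : k = i := by
    by_contra h; exact hk (by simp [Pi.single_apply, h])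
  exact this ▸ ⟨hiR, hic⟩
end

section
/- Let n ≥ 1 and let R, C ⊆ [n] be nonempty with r = min R and c = min C, and suppose r = c. Then (e_r, e_c) is the unique Nash equilibrium of the restricted game S restricted to R × C; that is, (p,q) ∈ Δ_R × Δ_C is a Nash equilibrium of the restricted game if and only if p = e_r and q = e_c. -/
open Finset

lemma single_mem_simplexOn {n : ℕ} {R : Finset (Fin n)} {m : Fin n} (hm : m ∈ R) :
    Pi.single m (1:ℝ) ∈ simplexOn R := by
  refine ⟨fun i => ?_, ?_, fun i hi => ?_⟩
  · rcases eq_or_ne i m with h | h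
    · subst h; simp
    · simp [Pi.single_apply, h]
  · simp [Pi.single_apply]
  · have h : i ≠ m := fun h => hi (h ▸ hm)
    simp [Pi.single_apply, h]

lemma payoff_single_right {n : ℕ} (M : Matrix (Fin n) (Fin n) ℝ) (p : Fin n → ℝ) (m : Fin n) :
    payoff M p (Pi.single m 1) = ∑ i, p i * M i m := by
  refine Finset.sum_congr rfl fun i _ => ?_
  simp [Pi.single_apply, mul_ite]

lemma payoff_single_left {n : ℕ} (M : Matrix (Fin n) (Fin n) ℝ) (q : Fin n → ℝ) (m : Fin n) :
    payoff M (Pi.single m 1) q = ∑ j, M m j * q j := by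
  unfold payoff
  rw [Finset.sum_comm]
  refine Finset.sum_congr rfl fun j _ => ?_
  simp [Pi.single_apply, ite_mul]

lemma sum_smat_right {n : ℕ} {R : Finset (Fin n)} {m : Fin n} (hmin : ∀ i ∈ R, m ≤ i)
    {p : Fin n → ℝ} (hp : p ∈ simplexOn R) :
    ∑ i, p i * Smat n i m = ∑ i, if m < i then p i else 0 := by
  refine Finset.sum_congr rfl fun i _ => ?_
  rcases lt_trichotomy i m with h | h | h
  · have hp0 : p i = 0 := hp.2.2 i fun hi => absurd (hmin i hi) (not_le.2 h)
    simp [hp0, (h.trans_le le_rfl).not_gt, h.not_gt]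
  · subst h; simp [Smat]
  · simp [Smat, h]

lemma sum_smat_left {n : ℕ} {C : Finset (Fin n)} {m : Fin n} (hmin : ∀ j ∈ C, m ≤ j)
    {q : Fin n → ℝ} (hq : q ∈ simplexOn C) :
    ∑ j, Smat n m j * q j = -∑ j, if m < j then q j else 0 := by
  rw [← Finset.sum_neg_distrib]
  refine Finset.sum_congr rfl fun j _ => ?_
  rcases lt_trichotomy j m with h | h | h
  · have hq0 : q j = 0 := hq.2.2 j fun hj => absurd (hmin j hj) (not_le.2 h)
    simp [hq0, h.not_gt]
  · subst h; simp [Smat]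
  · simp [Smat, h, h.not_gt, h.ne]

/-- If `r = min R = min C = c`, then `(e_r, e_c)` is the unique Nash equilibrium of the game
`S` restricted to `R × C`: `(p, q) ∈ Δ_R × Δ_C` is a Nash equilibrium iff
`p = e_r` and `q = e_c`. -/
theorem restrictedNE_S_r_eq_c {n : ℕ} (hn : 1 ≤ n) (R C : Finset (Fin n))
    (hR : R.Nonempty) (hC : C.Nonempty) (hrc : R.min' hR = C.min' hC) :
    ∀ p q : Fin n → ℝ, IsRestrictedNE R C p q ↔
      (p = Pi.single (R.min' hR) 1 ∧ q = Pi.single (C.min' hC) 1) := by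
  intro p q
  set m := R.min' hR with hm
  have hmR : m ∈ R := R.min'_mem hR
  have hmC : m ∈ C := by rw [hrc]; exact C.min'_mem hC
  have hminR : ∀ i ∈ R, m ≤ i := fun i hi => R.min'_le i hi
  have hminC : ∀ j ∈ C, m ≤ j := fun j hj => hrc.le.trans (C.min'_le j hj)
  have hCm : C.min' hC = m := hrc.symm
  constructor
  · rintro ⟨hp, hq, hrow, hcol⟩
    have hA0 : (0:ℝ) ≤ ∑ i, if m < i then p i else 0 :=
      Finset.sum_nonneg fun i _ => by split <;> [exact hp.1 i; exact le_rfl]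
    have hB0 : (0:ℝ) ≤ ∑ j, if m < j then q j else 0 :=
      Finset.sum_nonneg fun j _ => by split <;> [exact hq.1 j; exact le_rfl]
    have hrow' : payoff (Smat n) p q ≤ -∑ j, if m < j then q j else 0 := by
      have h := hrow _ (single_mem_simplexOn hmR)
      rwa [payoff_single_left, sum_smat_left hminC hq] at h
    have hcol' : (∑ i, if m < i then p i else 0) ≤ payoff (Smat n) p q := by
      have h := hcol _ (single_mem_simplexOn hmC)
      rwa [payoff_single_right, sum_smat_right hminR hp] at h
    have hA : (∑ i, if m < i then p i else 0) = 0 :=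
      le_antisymm (hcol'.trans (hrow'.trans (by linarith))) hA0
    have hB : (∑ j, if m < j then q j else 0) = 0 :=
      le_antisymm (by linarith [hcol'.trans hrow']) hB0
    have hps : ∀ i, i ≠ m → p i = 0 := by
      intro i hi
      rcases lt_or_gt_of_ne hi with h | h
      · exact hp.2.2 i fun him => absurd (hminR i him) (not_le.2 h)
      · have := (Finset.sum_eq_zero_iff_of_nonneg
          (fun j _ => by split <;> [exact hp.1 j; exact le_rfl])).1 hA i (Finset.mem_univ i)
        simpa [h] using this
    have hqs : ∀ j, j ≠ m → q j = 0 := by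
      intro j hj
      rcases lt_or_gt_of_ne hj with h | h
      · exact hq.2.2 j fun hjm => absurd (hminC j hjm) (not_le.2 h)
      · have := (Finset.sum_eq_zero_iff_of_nonneg
          (fun j _ => by split <;> [exact hq.1 j; exact le_rfl])).1 hB j (Finset.mem_univ j)
        simpa [h] using this
    have hpm : p m = 1 := by
      have h := hp.2.1
      rwa [Finset.sum_eq_single m (fun b _ hb => hps b hb) (by simp)] at h
    have hqm : q m = 1 := by
      have h := hq.2.1
      rwa [Finset.sum_eq_single m (fun b _ hb => hqs b hb) (by simp)] at h
    rw [hCm]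
    constructor <;> funext i <;> rcases eq_or_ne i m with h | h
    · subst h; simp [hpm]
    · simp [Pi.single_apply, h, hps i h]
    · subst h; simp [hqm]
    · simp [Pi.single_apply, h, hqs i h]
  · rintro ⟨hp, hq⟩
    rw [hCm] at hq
    subst hp; subst hq
    have hval : payoff (Smat n) (Pi.single m 1) (Pi.single m 1) = 0 := by
      rw [payoff_single_right, sum_smat_right hminR (single_mem_simplexOn hmR)]
      exact Finset.sum_eq_zero fun i _ => by
        split <;> simp_all [Pi.single_apply]
        · exact fun h => absurd h (by rename_i hlt; exact hlt.ne')
    refine ⟨single_mem_simplexOn hmR, single_mem_simplexOn hmC, ?_, ?_⟩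
    · intro p' hp'
      rw [hval, payoff_single_right, sum_smat_right hminR hp']
      exact Finset.sum_nonneg fun i _ => by split <;> [exact hp'.1 i; exact le_rfl]
    · intro q' hq'
      rw [hval, payoff_single_left, sum_smat_left hminC hq']
      simp only [neg_nonpos]
      exact Finset.sum_nonneg fun j _ => by split <;> [exact hq'.1 j; exact le_rfl]
end

section
/- Let n ≥ 2 and 2 ≤ k ≤ n, and let x ∈ ℝⁿ be the k-th row of the matrix U, i.e., xᵢ = 1 for i ≤ k−2, x_{k−1} = 2, x_k = 0, x_{k+1} = −2 (if k+1 ≤ n), and xᵢ = −1 for i > k+1. Let z₁,…,zₙ be i.i.d. random variables uniformly distributed on [−1, 1]. Then almost surely there is a unique index maximizing xᵢ + zᵢ; letting I denote this random index, E[I] ≤ (3/4)·k. -/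
open MeasureTheory ProbabilityTheory

section AuxLemmas

noncomputable def unif : Measure ℝ := (2 : ENNReal)⁻¹ • volume.restrict (Set.Icc (-1 : ℝ) 1)

lemma unif_apply (s : Set ℝ) (hs : MeasurableSet s) :
    unif s = 2⁻¹ * volume (s ∩ Set.Icc (-1 : ℝ) 1) := by
  simp [unif, Measure.restrict_apply hs]

instance : IsProbabilityMeasure unif := by
  constructor
  rw [unif_apply _ MeasurableSet.univ]
  simp [Real.volume_Icc]
  rw [show (1 : ℝ) + 1 = 2 by norm_num, ENNReal.ofReal_ofNat]
  simp [ENNReal.inv_mul_cancel]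

lemma unif_singleton (a : ℝ) : unif {a} = 0 := by
  rw [unif_apply _ (measurableSet_singleton a)]
  have : volume ({a} ∩ Set.Icc (-1 : ℝ) 1) = 0 :=
    measure_mono_null (Set.inter_subset_left) (Real.volume_singleton)
  simp [this]

lemma unif_Iio {t : ℝ} (h1 : -1 ≤ t) (h2 : t ≤ 1) :
    unif (Set.Iio t) = ENNReal.ofReal ((t + 1) / 2) := by
  rw [unif_apply _ measurableSet_Iio]
  have : Set.Iio t ∩ Set.Icc (-1 : ℝ) 1 = Set.Ico (-1) t := by
    ext y; simp only [Set.mem_inter_iff, Set.mem_Iio, Set.mem_Icc, Set.mem_Ico]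
    constructor
    · rintro ⟨h, h', _⟩; exact ⟨h', h⟩
    · rintro ⟨h, h'⟩; exact ⟨h', h, le_trans (le_of_lt h') h2⟩
  rw [this, Real.volume_Ico]
  rw [← ENNReal.ofReal_ofNat 2, ← ENNReal.ofReal_inv_of_pos (by norm_num), ← ENNReal.ofReal_mul (by norm_num)]
  ring_nf

lemma unif_Ico {a b : ℝ} (h1 : -1 ≤ a) (h2 : b ≤ 1) :
    unif (Set.Ico a b) = ENNReal.ofReal ((b - a) / 2) := by
  rw [unif_apply _ measurableSet_Ico]
  rcases le_or_gt a b with hab | hab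
  · have : Set.Ico a b ∩ Set.Icc (-1 : ℝ) 1 = Set.Ico a b := by
      apply Set.inter_eq_left.mpr
      intro y hy
      exact ⟨le_trans h1 hy.1, le_trans (le_of_lt hy.2) h2⟩
    rw [this, Real.volume_Ico]
    rw [← ENNReal.ofReal_ofNat 2, ← ENNReal.ofReal_inv_of_pos (by norm_num), ← ENNReal.ofReal_mul (by norm_num)]
    ring_nf
  · rw [Set.Ico_eq_empty (by intro h; exact absurd (le_of_lt h) (not_le.mpr hab))]
    simp [ENNReal.ofReal_eq_zero]
    nlinarith

lemma unif_Ici_zero : unif (Set.Ici (0:ℝ)) = 2⁻¹ := by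
  rw [unif_apply _ measurableSet_Ici]
  have : Set.Ici (0:ℝ) ∩ Set.Icc (-1 : ℝ) 1 = Set.Icc 0 1 := by
    ext y; simp only [Set.mem_inter_iff, Set.mem_Ici, Set.mem_Icc]
    constructor
    · rintro ⟨h, _, h'⟩; exact ⟨h, h'⟩
    · rintro ⟨h, h'⟩; exact ⟨h, by linarith, h'⟩
  rw [this, Real.volume_Icc]
  norm_num

lemma unif_Iio_neg_one : unif (Set.Iio (-1 : ℝ)) = 0 := by
  rw [unif_apply _ measurableSet_Iio]
  have : Set.Iio (-1:ℝ) ∩ Set.Icc (-1 : ℝ) 1 = ∅ := by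
    ext y; simp only [Set.mem_inter_iff, Set.mem_Iio, Set.mem_Icc, Set.mem_empty_iff_false]
    constructor
    · rintro ⟨h, h', _⟩; linarith
    · exact False.elim
  simp [this]

lemma unif_Ioi_one : unif (Set.Ioi (1 : ℝ)) = 0 := by
  rw [unif_apply _ measurableSet_Ioi]
  have h : Set.Ioi (1:ℝ) ∩ Set.Icc (-1 : ℝ) 1 = ∅ := by
    ext y; simp only [Set.mem_inter_iff, Set.mem_Ioi, Set.mem_Icc, Set.mem_empty_iff_false]
    constructor
    · rintro ⟨h, _, h'⟩; linarith
    · exact False.elim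
  simp [h]

lemma gauss_sum_real (m : ℕ) : ∑ j ∈ Finset.range m, ((j : ℝ) + 1) = m * (m + 1) / 2 := by
  induction m with
  | zero => simp
  | succ t ih => rw [Finset.sum_range_succ, ih]; push_cast; ring

lemma pow_sub_pow_ge (p : ℕ) {a b : ℝ} (hb : 0 ≤ b) (hab : b ≤ a) :
    ((p : ℝ) + 1) * b ^ p * (a - b) ≤ a ^ (p + 1) - b ^ (p + 1) := by
  induction p with
  | zero => simp
  | succ t ih =>
    have ha : 0 ≤ a := le_trans hb hab
    have h1 : a ^ (t + 1 + 1) - b ^ (t + 1 + 1) = a * (a ^ (t+1) - b ^ (t+1)) + (a - b) * b ^ (t+1) := by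
      ring
    rw [h1]
    have h2 : a * (((t : ℝ) + 1) * b ^ t * (a - b)) ≤ a * (a ^ (t+1) - b ^ (t+1)) :=
      mul_le_mul_of_nonneg_left ih ha
    have h3 : b * (((t : ℝ) + 1) * b ^ t * (a - b)) ≤ a * (((t : ℝ) + 1) * b ^ t * (a - b)) := by
      apply mul_le_mul_of_nonneg_right hab
      exact mul_nonneg (mul_nonneg (by positivity) (pow_nonneg hb t)) (sub_nonneg.mpr hab)
    have hid : ((t:ℝ) + 1 + 1) * b ^ (t+1) * (a - b)
        = b * (((t : ℝ) + 1) * b ^ t * (a - b)) + (a - b) * b ^ (t+1) := by ring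
    push_cast
    linarith

/-- key numeric bound: with `m = c+1`, `∑_{j=1}^m ((m+j)/(2m))^c ≤ 3`. -/
lemma sum_ratio_pow_le (c : ℕ) :
    ∑ j ∈ Finset.range (c + 1), (((c:ℝ) + 1 + ((j:ℝ) + 1)) / (2 * ((c:ℝ) + 1))) ^ c ≤ 3 := by
  set m : ℕ := c + 1 with hm
  have hmpos : (0:ℝ) < (m:ℝ) := by positivity
  set r : ℕ → ℝ := fun j => ((m:ℝ) + (j:ℝ)) / (2 * (m:ℝ)) with hr
  have hrval : ∀ j : ℕ, r j = ((m:ℝ) + (j:ℝ)) / (2 * (m:ℝ)) := fun j => rfl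
  have hrm : r m = 1 := by rw [hrval]; field_simp; ring
  have hrnonneg : ∀ j : ℕ, 0 ≤ r j := by
    intro j; rw [hrval]; positivity
  have hrmono : ∀ j : ℕ, r j ≤ r (j + 1) := by
    intro j; rw [hrval, hrval]
    apply div_le_div_of_nonneg_right ?_ (by positivity) |>.trans_eq rfl
    push_cast; linarith
  -- telescoping bound for j+1 ≤ m-1, i.e. j ∈ range (m-1) = range c
  have key : ∀ j : ℕ, r (j+1) ^ c ≤ 2 * (r (j+2) ^ m - r (j+1) ^ m) := by
    intro j
    have h := pow_sub_pow_ge c (hrnonneg (j+1)) (hrmono (j+1))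
    have hdiff : r (j+2) - r (j+1) = 1 / (2 * (m:ℝ)) := by
      rw [hrval, hrval]; push_cast; field_simp; ring
    rw [hdiff] at h
    have hc1 : ((c:ℝ) + 1) = (m:ℝ) := by rw [hm]; push_cast; ring
    rw [hc1] at h
    have : (m:ℝ) * r (j+1) ^ c * (1 / (2 * (m:ℝ))) = r (j+1) ^ c / 2 := by
      field_simp
    rw [this] at h
    simp only [hm]
    norm_num at h ⊢
    linarith
  have tele : ∑ j ∈ Finset.range c, (r (j+2) ^ m - r (j+1) ^ m)
      = r (c+1) ^ m - r 1 ^ m := by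
    have := Finset.sum_range_sub (fun j => r (j+1) ^ m) c
    simpa using this
  have step1 : ∑ j ∈ Finset.range c, r (j+1) ^ c ≤ 2 := by
    calc ∑ j ∈ Finset.range c, r (j+1) ^ c
        ≤ ∑ j ∈ Finset.range c, 2 * (r (j+2) ^ m - r (j+1) ^ m) :=
          Finset.sum_le_sum (fun j _ => key j)
      _ = 2 * (r (c+1) ^ m - r 1 ^ m) := by rw [← Finset.mul_sum, tele]
      _ ≤ 2 := by
          have h1 : r (c+1) ^ m ≤ 1 := by
            rw [show c + 1 = m from rfl, hrm]; simp
          have h2 : 0 ≤ r 1 ^ m := pow_nonneg (hrnonneg 1) m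
          linarith
  have final : ∑ j ∈ Finset.range m, r (j+1) ^ c ≤ 3 := by
    rw [hm, Finset.sum_range_succ, show c + 1 = m from rfl, hrm]
    simp only [one_pow]
    linarith
  calc ∑ j ∈ Finset.range (c + 1), (((c:ℝ) + 1 + ((j:ℝ) + 1)) / (2 * ((c:ℝ) + 1))) ^ c
      = ∑ j ∈ Finset.range m, r (j+1) ^ c := by
        apply Finset.sum_congr rfl
        intro j _
        rw [hrval, hm]; push_cast; ring
    _ ≤ 3 := final

lemma filter_val_lt_sum {n t : ℕ} (hn : 0 < n) (ht : t ≤ n) (F : ℕ → ℝ) :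
    ∑ i ∈ Finset.univ.filter (fun i : Fin n => (i : ℕ) < t), F (i : ℕ)
      = ∑ j ∈ Finset.range t, F j := by
  apply Finset.sum_nbij' (i := fun i : Fin n => (i : ℕ))
    (j := fun s : ℕ => (⟨s % n, Nat.mod_lt _ hn⟩ : Fin n))
  · intro a ha; simp only [Finset.mem_filter] at ha; exact Finset.mem_range.mpr ha.2
  · intro b hb
    simp only [Finset.mem_range] at hb
    simp only [Finset.mem_filter, Finset.mem_univ, true_and]
    rw [Nat.mod_eq_of_lt (lt_of_lt_of_le hb ht)]; exact hb
  · intro a ha; simp only [Finset.mem_filter] at ha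
    exact Fin.ext (by simp [Nat.mod_eq_of_lt a.isLt])
  · intro b hb; simp only [Finset.mem_range] at hb
    simp [Nat.mod_eq_of_lt (lt_of_lt_of_le hb ht)]
  · intro a ha; rfl
lemma map_fun_eq_pi {Ω : Type*} [MeasurableSpace Ω] (P : Measure Ω) [IsProbabilityMeasure P]
    {n : ℕ} (z : Fin n → Ω → ℝ) (hmeas : ∀ i, Measurable (z i))
    (hindep : iIndepFun z P)
    (hunif : ∀ i, Measure.map (z i) P = unif) :
    Measure.map (fun ω i => z i ω) P = Measure.pi (fun _ => unif) := by
  symm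
  apply Measure.pi_eq
  intro s hs
  rw [Measure.map_apply (measurable_pi_lambda _ hmeas) (MeasurableSet.univ_pi hs)]
  have hset : (fun ω i => z i ω) ⁻¹' (Set.pi Set.univ s) = ⋂ i ∈ Finset.univ, z i ⁻¹' s i := by
    ext ω; simp [Set.mem_pi]
  rw [hset, hindep.measure_inter_preimage_eq_mul Finset.univ (fun i _ => hs i)]
  apply Finset.prod_congr rfl
  intro i _
  rw [← hunif i, Measure.map_apply (hmeas i) (hs i)]

lemma pi_map_comp_equiv {n : ℕ} (e : Fin n ≃ Fin n) :
    Measure.map (fun v : Fin n → ℝ => v ∘ e) (Measure.pi fun _ : Fin n => unif)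
      = Measure.pi fun _ : Fin n => unif := by
  symm
  apply Measure.pi_eq
  intro s hs
  have hWm : Measurable (fun v : Fin n → ℝ => v ∘ e) :=
    measurable_pi_lambda _ (fun l => measurable_pi_apply (e l))
  rw [Measure.map_apply hWm (MeasurableSet.univ_pi hs)]
  have hset : (fun v : Fin n → ℝ => v ∘ e) ⁻¹' (Set.pi Set.univ s)
      = Set.pi Set.univ (fun l => s (e.symm l)) := by
    ext v
    simp only [Set.mem_preimage, Set.mem_pi, Set.mem_univ, forall_true_left, Function.comp_apply,
      true_implies]
    constructor
    · intro h l; have := h (e.symm l); simpa using this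
    · intro h l; have := h (e l); rwa [Equiv.symm_apply_apply] at this
  rw [hset, Measure.pi_pi]
  exact (Equiv.prod_comp e.symm (fun l => unif (s l))).symm ▸ rfl
lemma prob_eq_zero_of_indep {Ω : Type*} [MeasurableSpace Ω] (P : Measure Ω)
    [IsProbabilityMeasure P] {f g : Ω → ℝ} (hf : Measurable f) (hg : Measurable g)
    (h : IndepFun f g P) (hmf : Measure.map f P = unif) (hmg : Measure.map g P = unif)
    (a b : ℝ) : P {ω | a + f ω = b + g ω} = 0 := by
  have hD : MeasurableSet {q : ℝ × ℝ | a + q.1 = b + q.2} :=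
    measurableSet_eq_fun (measurable_const.add measurable_fst)
      (measurable_const.add measurable_snd)
  have hmap : Measure.map (fun ω => (f ω, g ω)) P = unif.prod unif := by
    rw [(indepFun_iff_map_prod_eq_prod_map_map hf.aemeasurable hg.aemeasurable).mp h, hmf, hmg]
  have hpre : {ω | a + f ω = b + g ω} = (fun ω => (f ω, g ω)) ⁻¹' {q : ℝ × ℝ | a + q.1 = b + q.2} := rfl
  rw [hpre, ← Measure.map_apply (hf.prodMk hg) hD, hmap, Measure.prod_apply hD]
  have : ∀ u : ℝ, unif (Prod.mk u ⁻¹' {q : ℝ × ℝ | a + q.1 = b + q.2}) = 0 := by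
    intro u
    have : Prod.mk u ⁻¹' {q : ℝ × ℝ | a + q.1 = b + q.2} = {a + u - b} := by
      ext w; simp only [Set.mem_preimage, Set.mem_setOf_eq, Set.mem_singleton_iff]; constructor
      · intro hw; linarith
      · intro hw; rw [hw]; ring
    rw [this, unif_singleton]
  simp only [this, lintegral_zero]
lemma card_filter_val_lt {n t : ℕ} (hn : 0 < n) (ht : t ≤ n) :
    (Finset.univ.filter (fun i : Fin n => (i : ℕ) < t)).card = t := by
  have h := filter_val_lt_sum (n := n) (t := t) hn ht (fun _ => (1:ℝ))
  rw [Finset.sum_const, Finset.sum_const] at h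
  simpa using h

lemma pi_single_box {n : ℕ} [DecidableEq (Fin n)] (i0 : Fin n) (s : Set ℝ) :
    (Measure.pi fun _ : Fin n => unif)
      (Set.pi Set.univ (fun l => if l = i0 then s else Set.univ)) = unif s := by
  rw [Measure.pi_pi]
  have h : ∀ l : Fin n, unif (if l = i0 then s else Set.univ)
      = if l = i0 then unif s else 1 := by
    intro l; split_ifs <;> simp
  simp_rw [h]
  rw [Finset.prod_ite_eq' Finset.univ i0 (fun _ => unif s)]
  simp

lemma star_bound {n k : ℕ} (hk2 : 2 ≤ k) (hkn : k ≤ n) (x : Fin n → ℝ)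
    (istar : Fin n) (histar : (istar : ℕ) = k - 2)
    (hxstar : x istar = 2) (hx1 : ∀ l : Fin n, (l : ℕ) + 2 < k → x l = 1) :
    ((Measure.pi fun _ : Fin n => unif)
      {v : Fin n → ℝ | ∀ j, j ≠ istar → x j + v j < x istar + v istar}).toReal
      ≤ 1 / 2 + 3 / (2 * ((k : ℝ) - 1)) := by
  classical
  have hnpos : 0 < n := by omega
  set m : ℕ := k - 1 with hm
  set c : ℕ := k - 2 with hc
  have hmc : m = c + 1 := by omega
  have hmpos : 0 < m := by omega
  have hmR : (0:ℝ) < (m:ℝ) := by exact_mod_cast hmpos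
  set a : ℕ → ℝ := fun t => -1 + (t:ℝ)/(m:ℝ) with ha
  set B : ℕ → Fin n → Set ℝ := fun j l =>
    if l = istar then Set.Ico (a j) (a (j+1))
    else if (l:ℕ) + 2 < k then Set.Iio (1 + a (j+1)) else Set.univ with hB
  set ν : Measure (Fin n → ℝ) := Measure.pi fun _ : Fin n => unif with hν
  -- basic facts about a
  have ha_le : ∀ j : ℕ, j ≤ m → a j ≤ 0 := by
    intro j hj
    simp only [ha]
    have : (j:ℝ)/(m:ℝ) ≤ 1 := by
      rw [div_le_one hmR]; exact_mod_cast hj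
    linarith
  have ha_ge : ∀ j : ℕ, -1 ≤ a j := by
    intro j; simp only [ha]
    have : (0:ℝ) ≤ (j:ℝ)/(m:ℝ) := by positivity
    linarith
  -- covering
  have hsub : {v : Fin n → ℝ | ∀ j, j ≠ istar → x j + v j < x istar + v istar}
      ⊆ (Set.pi Set.univ (fun l => if l = istar then Set.Iio (-1:ℝ) else Set.univ))
        ∪ (Set.pi Set.univ (fun l => if l = istar then Set.Ici (0:ℝ) else Set.univ))
        ∪ ⋃ j ∈ Finset.range m, Set.pi Set.univ (B j) := by
    intro v hv
    simp only [Set.mem_setOf_eq] at hv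
    by_cases h0 : v istar < -1
    · left; left
      intro l _
      by_cases hl : l = istar
      · subst hl; simp [h0]
      · simp [hl]
    by_cases h1 : 0 ≤ v istar
    · left; right
      intro l _
      by_cases hl : l = istar
      · subst hl; simp [h1]
      · simp [hl]
    right
    push_neg at h0 h1
    set w : ℝ := v istar + 1 with hw
    have hw0 : 0 ≤ w := by simp only [hw]; linarith
    have hw1 : w < 1 := by simp only [hw]; linarith
    set j : ℕ := Nat.floor (w * m) with hj
    have hjle : (j:ℝ) ≤ w * m := Nat.floor_le (by positivity)
    have hjgt : w * m < (j:ℝ) + 1 := Nat.lt_floor_add_one _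
    have hjm : j < m := by
      rw [hj, Nat.floor_lt (by positivity)]
      nlinarith
    have hlow : a j ≤ v istar := by
      simp only [ha]
      have : (j:ℝ)/(m:ℝ) ≤ w := by
        rw [div_le_iff₀ hmR]; exact hjle
      simp only [hw] at this; linarith
    have hhigh : v istar < a (j+1) := by
      simp only [ha]
      have : w < ((j:ℝ)+1)/(m:ℝ) := by
        rw [lt_div_iff₀ hmR]; exact hjgt
      push_cast
      simp only [hw] at this; linarith
    refine Set.mem_biUnion (Finset.mem_coe.mpr (Finset.mem_range.mpr hjm)) ?_
    intro l _
    simp only [hB]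
    split_ifs with hl1 hl2
    · subst hl1; exact ⟨hlow, hhigh⟩
    · have h := hv l hl1
      rw [hx1 l hl2, hxstar] at h
      simp only [Set.mem_Iio]
      linarith
    · trivial
  -- measure bound
  have hmeasb : ν {v : Fin n → ℝ | ∀ j, j ≠ istar → x j + v j < x istar + v istar}
      ≤ 2⁻¹ + ∑ j ∈ Finset.range m, ν (Set.pi Set.univ (B j)) := by
    calc ν {v : Fin n → ℝ | ∀ j, j ≠ istar → x j + v j < x istar + v istar}
        ≤ ν ((Set.pi Set.univ (fun l => if l = istar then Set.Iio (-1:ℝ) else Set.univ))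
            ∪ (Set.pi Set.univ (fun l => if l = istar then Set.Ici (0:ℝ) else Set.univ))
            ∪ ⋃ j ∈ Finset.range m, Set.pi Set.univ (B j)) := measure_mono hsub
      _ ≤ (ν (Set.pi Set.univ (fun l => if l = istar then Set.Iio (-1:ℝ) else Set.univ))
            + ν (Set.pi Set.univ (fun l => if l = istar then Set.Ici (0:ℝ) else Set.univ)))
            + ν (⋃ j ∈ Finset.range m, Set.pi Set.univ (B j)) := by
          refine le_trans (measure_union_le _ _) ?_
          gcongr
          exact measure_union_le _ _
      _ ≤ (0 + 2⁻¹) + ∑ j ∈ Finset.range m, ν (Set.pi Set.univ (B j)) := by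
          gcongr
          · rw [hν, pi_single_box istar (Set.Iio (-1:ℝ)), unif_Iio_neg_one]
          · rw [hν, pi_single_box istar (Set.Ici (0:ℝ)), unif_Ici_zero]
          · exact measure_biUnion_finset_le _ _
      _ = 2⁻¹ + ∑ j ∈ Finset.range m, ν (Set.pi Set.univ (B j)) := by rw [zero_add]
  -- compute box measures
  have hbox : ∀ j ∈ Finset.range m, ν (Set.pi Set.univ (B j))
      = ENNReal.ofReal ((1/(2*(m:ℝ))) * (((m:ℝ) + ((j:ℝ)+1)) / (2*(m:ℝ))) ^ c) := by
    intro j hj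
    have hjm : j < m := Finset.mem_range.mp hj
    have hIco : unif (Set.Ico (a j) (a (j+1))) = ENNReal.ofReal (1/(2*(m:ℝ))) := by
      rw [unif_Ico (ha_ge j) (le_trans (ha_le (j+1) (by omega)) (by norm_num))]
      congr 1
      simp only [ha]
      push_cast
      field_simp
      ring
    have hIio : unif (Set.Iio (1 + a (j+1)))
        = ENNReal.ofReal ((((m:ℝ) + ((j:ℝ)+1)) / (2*(m:ℝ)))) := by
      rw [unif_Iio (by have := ha_ge (j+1); linarith) (by have := ha_le (j+1) (by omega); linarith)]
      congr 1
      simp only [ha]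
      push_cast
      field_simp
      ring
    rw [hν, Measure.pi_pi]
    rw [← Finset.prod_erase_mul Finset.univ _ (Finset.mem_univ istar)]
    have hstar_box : B j istar = Set.Ico (a j) (a (j+1)) := by simp [hB]
    have herase : ∀ l ∈ Finset.univ.erase istar,
        unif (B j l) = if (l:ℕ) + 2 < k then ENNReal.ofReal ((((m:ℝ) + ((j:ℝ)+1)) / (2*(m:ℝ)))) else 1 := by
      intro l hl
      have hli : l ≠ istar := (Finset.mem_erase.mp hl).1
      simp only [hB, if_neg hli]
      split_ifs with h2
      · exact hIio
      · simp
    rw [Finset.prod_congr rfl herase, hstar_box, hIco]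
    rw [Finset.prod_ite, Finset.prod_const, Finset.prod_const, one_pow, mul_one]
    have hcard : ((Finset.univ.erase istar).filter (fun l : Fin n => (l:ℕ) + 2 < k)).card = c := by
      have h1 : (Finset.univ.erase istar).filter (fun l : Fin n => (l:ℕ) + 2 < k)
          = Finset.univ.filter (fun l : Fin n => (l:ℕ) < k - 2) := by
        ext l
        simp only [Finset.mem_filter, Finset.mem_erase, Finset.mem_univ, true_and, and_true]
        constructor
        · rintro ⟨-, h⟩; omega
        · intro h
          constructor
          · intro hcon; rw [hcon, histar] at h; omega
          · omega
      rw [h1, card_filter_val_lt hnpos (by omega)]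
    rw [hcard]
    rw [← ENNReal.ofReal_pow (by positivity), ← ENNReal.ofReal_mul (by positivity)]
    rw [mul_comm]
  -- put it together
  have hsum : ∑ j ∈ Finset.range m, ν (Set.pi Set.univ (B j))
      = ENNReal.ofReal (∑ j ∈ Finset.range m, (1/(2*(m:ℝ))) * (((m:ℝ) + ((j:ℝ)+1)) / (2*(m:ℝ))) ^ c) := by
    rw [Finset.sum_congr rfl hbox]
    rw [ENNReal.ofReal_sum_of_nonneg]
    intro j _
    positivity
  have hreal : ∑ j ∈ Finset.range m, (1/(2*(m:ℝ))) * (((m:ℝ) + ((j:ℝ)+1)) / (2*(m:ℝ))) ^ c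
      ≤ 3 / (2 * ((k : ℝ) - 1)) := by
    rw [← Finset.mul_sum]
    have hmcast : (m:ℝ) = (c:ℝ) + 1 := by rw [hmc]; push_cast; ring
    have hkm : (k:ℝ) - 1 = (m:ℝ) := by
      rw [hm]; push_cast [Nat.cast_sub (by omega : 1 ≤ k)]; ring
    have h3 : ∑ j ∈ Finset.range m, (((m:ℝ) + ((j:ℝ)+1)) / (2*(m:ℝ))) ^ c ≤ 3 := by
      have h := sum_ratio_pow_le c
      rw [hmc]
      push_cast
      push_cast at h
      convert h using 2 with j hj
    rw [hkm]
    calc (1/(2*(m:ℝ))) * ∑ j ∈ Finset.range m, (((m:ℝ) + ((j:ℝ)+1)) / (2*(m:ℝ))) ^ c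
        ≤ (1/(2*(m:ℝ))) * 3 := by
          apply mul_le_mul_of_nonneg_left h3 (by positivity)
      _ = 3 / (2*(m:ℝ)) := by ring
  calc (ν {v : Fin n → ℝ | ∀ j, j ≠ istar → x j + v j < x istar + v istar}).toReal
      ≤ (2⁻¹ + ENNReal.ofReal (∑ j ∈ Finset.range m, (1/(2*(m:ℝ))) * (((m:ℝ) + ((j:ℝ)+1)) / (2*(m:ℝ))) ^ c)).toReal := by
        apply ENNReal.toReal_mono
        · exact ENNReal.add_ne_top.mpr ⟨by norm_num, ENNReal.ofReal_ne_top⟩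
        · rw [← hsum]; exact hmeasb
    _ = 1/2 + ∑ j ∈ Finset.range m, (1/(2*(m:ℝ))) * (((m:ℝ) + ((j:ℝ)+1)) / (2*(m:ℝ))) ^ c := by
        rw [ENNReal.toReal_add (by norm_num) ENNReal.ofReal_ne_top]
        rw [ENNReal.toReal_ofReal (by positivity)]
        norm_num
    _ ≤ 1/2 + 3 / (2 * ((k : ℝ) - 1)) := by linarith [hreal]
lemma measure_pi_S_swap {n : ℕ} (x : Fin n → ℝ) (i j : Fin n) (hxij : x i = x j)
    (hS : MeasurableSet {v : Fin n → ℝ | ∀ r, r ≠ j → x r + v r < x j + v j}) :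
    (Measure.pi fun _ : Fin n => unif) {v : Fin n → ℝ | ∀ r, r ≠ i → x r + v r < x i + v i}
      = (Measure.pi fun _ : Fin n => unif) {v : Fin n → ℝ | ∀ r, r ≠ j → x r + v r < x j + v j} := by
  classical
  set e := Equiv.swap i j with he
  have hWm : Measurable (fun v : Fin n → ℝ => v ∘ e) :=
    measurable_pi_lambda _ (fun l => measurable_pi_apply _)
  have hxs : ∀ l, x (e l) = x l := by
    intro l
    rcases eq_or_ne l i with rfl | hli
    · rw [he, Equiv.swap_apply_left]; exact hxij.symm
    rcases eq_or_ne l j with rfl | hlj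
    · rw [he, Equiv.swap_apply_right]; exact hxij
    · rw [he, Equiv.swap_apply_of_ne_of_ne hli hlj]
  have key : (fun v : Fin n → ℝ => v ∘ e) ⁻¹' {v | ∀ r, r ≠ j → x r + v r < x j + v j}
      = {v : Fin n → ℝ | ∀ r, r ≠ i → x r + v r < x i + v i} := by
    ext v
    simp only [Set.mem_preimage, Set.mem_setOf_eq, Function.comp_apply]
    have hej : e j = i := by rw [he, Equiv.swap_apply_right]
    have hei : e i = j := by rw [he, Equiv.swap_apply_left]
    constructor
    · intro h r hri
      have hne : e r ≠ j := by
        intro hcon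
        apply hri
        have := congrArg e hcon
        rwa [he, Equiv.swap_apply_self, ← he, hej] at this
      have h1 := h (e r) hne
      rw [he, Equiv.swap_apply_self, ← he] at h1
      rw [hxs r, hej] at h1
      rw [hxij]
      exact h1
    · intro h r hrj
      have hne : e r ≠ i := by
        intro hcon
        apply hrj
        have := congrArg e hcon
        rwa [he, Equiv.swap_apply_self, ← he, hei] at this
      have h1 := h (e r) hne
      rw [hxs r] at h1
      rw [hej, ← hxij]
      exact h1
  conv_rhs => rw [← pi_map_comp_equiv e]
  rw [Measure.map_apply hWm hS, key]

end AuxLemmas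

/-- Let `x` be the `k`-th row of the matrix `U` (1-based: entries `1` for `i ≤ k-2`,
`2` at `k-1`, `0` at `k`, `-2` at `k+1`, `-1` for `i > k+1`) and let `z i` be i.i.d.
uniform on `[-1, 1]`. Then almost surely there is a unique index maximizing `x i + z i`,
and for any such (measurable) argmax `I`, the expected 1-based index satisfies
`E[I] ≤ (3/4) k`. -/
theorem expected_argmax_U_row {Ω : Type*} [MeasurableSpace Ω] (P : Measure Ω)
    [IsProbabilityMeasure P] (n k : ℕ) (hn : 2 ≤ n) (hk2 : 2 ≤ k) (hkn : k ≤ n)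
    (x : Fin n → ℝ)
    (hx : ∀ i : Fin n, x i =
      if (i : ℕ) + 1 < k - 1 then 1
      else if (i : ℕ) + 1 = k - 1 then 2
      else if (i : ℕ) + 1 = k then 0
      else if (i : ℕ) + 1 = k + 1 then -2
      else -1)
    (z : Fin n → Ω → ℝ) (hmeas : ∀ i, Measurable (z i))
    (hindep : iIndepFun z P)
    (hunif : ∀ i, Measure.map (z i) P
      = (2 : ENNReal)⁻¹ • volume.restrict (Set.Icc (-1 : ℝ) 1)) :
    (∀ᵐ ω ∂P, ∃! i : Fin n, ∀ j, j ≠ i → x j + z j ω < x i + z i ω) ∧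
    ∀ I : Ω → Fin n, Measurable I →
      (∀ᵐ ω ∂P, ∀ j, j ≠ I ω → x j + z j ω < x (I ω) + z (I ω) ω) →
      ∫ ω, (((I ω : ℕ) : ℝ) + 1) ∂P ≤ (3 / 4) * k := by
  classical
  have npos : 0 < n := by omega
  have hunif' : ∀ i, Measure.map (z i) P = unif := fun i => hunif i
  have hZm : Measurable (fun ω (i : Fin n) => z i ω) := measurable_pi_lambda _ hmeas
  have hlaw : Measure.map (fun ω (i : Fin n) => z i ω) P = Measure.pi (fun _ : Fin n => unif) :=
    map_fun_eq_pi P z hmeas hindep hunif'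
  have hSmeas : ∀ i : Fin n,
      MeasurableSet {v : Fin n → ℝ | ∀ j, j ≠ i → x j + v j < x i + v i} := by
    intro i
    have hSet : {v : Fin n → ℝ | ∀ j, j ≠ i → x j + v j < x i + v i}
        = ⋂ j, ⋂ (_ : j ≠ i), {v : Fin n → ℝ | x j + v j < x i + v i} := by
      ext v; simp only [Set.mem_setOf_eq, Set.mem_iInter]
    rw [hSet]
    exact MeasurableSet.iInter fun j => MeasurableSet.iInter fun _ =>
      measurableSet_lt (measurable_const.add (measurable_pi_apply j))
        (measurable_const.add (measurable_pi_apply i))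
  have hAmeas : ∀ i : Fin n,
      MeasurableSet {ω | ∀ j, j ≠ i → x j + z j ω < x i + z i ω} :=
    fun i => hZm (hSmeas i)
  have hPA : ∀ i : Fin n, P {ω | ∀ j, j ≠ i → x j + z j ω < x i + z i ω}
      = (Measure.pi fun _ : Fin n => unif)
          {v : Fin n → ℝ | ∀ j, j ≠ i → x j + v j < x i + v i} := by
    intro i
    rw [← hlaw, Measure.map_apply hZm (hSmeas i)]
    rfl
  -- a.e. all values distinct
  have hgood : ∀ᵐ ω ∂P, ∀ i j : Fin n, i ≠ j → x i + z i ω ≠ x j + z j ω := by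
    rw [ae_all_iff]; intro i
    rw [ae_all_iff]; intro j
    by_cases hij : i = j
    · filter_upwards with ω h; exact absurd hij h
    · have h0 : P {ω | x i + z i ω = x j + z j ω} = 0 :=
        prob_eq_zero_of_indep P (hmeas i) (hmeas j) (hindep.indepFun hij)
          (hunif' i) (hunif' j) (x i) (x j)
      rw [ae_iff]
      apply measure_mono_null ?_ h0
      intro ω hω
      simp only [Set.mem_setOf_eq] at hω ⊢
      push_neg at hω
      exact hω.2
  -- a.e. unique strict argmax
  have hexu : ∀ᵐ ω ∂P, ∃! i : Fin n, ∀ j, j ≠ i → x j + z j ω < x i + z i ω := by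
    filter_upwards [hgood] with ω hg
    obtain ⟨i, -, hi⟩ := Finset.exists_max_image Finset.univ
      (fun l : Fin n => x l + z l ω) ⟨⟨0, npos⟩, Finset.mem_univ _⟩
    refine ⟨i, fun j hj => lt_of_le_of_ne (hi j (Finset.mem_univ j)) (hg j i hj), ?_⟩
    intro y hy
    by_contra hne
    have h1 : x i + z i ω < x y + z y ω := hy i (Ne.symm hne)
    have h2 : x y + z y ω < x i + z i ω :=
      lt_of_le_of_ne (hi y (Finset.mem_univ y)) (hg y i hne)
    exact absurd h1 (lt_asymm h2)
  refine ⟨hexu, ?_⟩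
  intro I hImeas hI
  -- disjointness of argmax events
  have hdisj : ∀ i j : Fin n, i ≠ j →
      Disjoint {ω | ∀ l, l ≠ i → x l + z l ω < x i + z i ω}
        {ω | ∀ l, l ≠ j → x l + z l ω < x j + z j ω} := by
    intro i j hij
    rw [Set.disjoint_left]
    intro ω hi hj
    exact absurd (hi j (Ne.symm hij)) (lt_asymm (hj i hij))
  have hcover : P (⋃ i : Fin n, {ω | ∀ l, l ≠ i → x l + z l ω < x i + z i ω}) = 1 := by
    have hmem : ∀ᵐ ω ∂P, ω ∈ ⋃ i : Fin n, {ω | ∀ l, l ≠ i → x l + z l ω < x i + z i ω} := by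
      filter_upwards [hexu] with ω h
      obtain ⟨i, hi, -⟩ := h
      exact Set.mem_iUnion.mpr ⟨i, hi⟩
    have h0 : P (⋃ i : Fin n, {ω | ∀ l, l ≠ i → x l + z l ω < x i + z i ω})ᶜ = 0 := by
      exact ae_iff.mp hmem
    have htot := measure_add_measure_compl (μ := P) (MeasurableSet.iUnion hAmeas)
    rw [h0, add_zero, measure_univ] at htot
    exact htot
  have hsumP : ∑ i : Fin n, P {ω | ∀ l, l ≠ i → x l + z l ω < x i + z i ω} = 1 := by
    rw [← hcover, measure_iUnion (fun i j hij => hdisj i j hij) hAmeas, tsum_fintype]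
  set p : Fin n → ℝ :=
    fun i => (P {ω | ∀ l, l ≠ i → x l + z l ω < x i + z i ω}).toReal with hpdef
  have hp_nonneg : ∀ i, 0 ≤ p i := fun i => ENNReal.toReal_nonneg
  have hsum_p : ∑ i, p i = 1 := by
    have := congrArg ENNReal.toReal hsumP
    rw [ENNReal.toReal_sum (fun i _ => measure_ne_top P _)] at this
    simpa using this
  -- value facts about x
  have hx1 : ∀ l : Fin n, (l : ℕ) + 2 < k → x l = 1 := by
    intro l hl; rw [hx l, if_pos (by omega)]
  have hx2 : ∀ l : Fin n, (l : ℕ) + 2 = k → x l = 2 := by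
    intro l hl; rw [hx l, if_neg (by omega), if_pos (by omega)]
  have hxle : ∀ l : Fin n, k ≤ (l : ℕ) + 1 → x l ≤ 0 := by
    intro l hl
    rw [hx l]
    split_ifs with h1 h2 h3 h4
    · exact absurd h1 (by omega)
    · exact absurd h2 (by omega)
    · norm_num
    · norm_num
    · norm_num
  have istar_lt : k - 2 < n := by omega
  -- null indices
  have hnull : ∀ i : Fin n, k ≤ (i : ℕ) + 1 → p i = 0 := by
    intro i hik
    have hne : (⟨k - 2, istar_lt⟩ : Fin n) ≠ i := by
      intro hcon
      have := congrArg Fin.val hcon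
      simp only [Fin.val_mk] at this
      omega
    have hxi : x i ≤ 0 := hxle i hik
    have hxstar : x (⟨k - 2, istar_lt⟩ : Fin n) = 2 := hx2 _ (by simp; omega)
    have hsub : {ω | ∀ l, l ≠ i → x l + z l ω < x i + z i ω}
        ⊆ {ω | z (⟨k - 2, istar_lt⟩ : Fin n) ω < -1} ∪ {ω | 1 < z i ω} := by
      intro ω hω
      have h := hω (⟨k - 2, istar_lt⟩ : Fin n) hne
      rw [hxstar] at h
      simp only [Set.mem_union, Set.mem_setOf_eq]
      by_contra hcon
      push_neg at hcon
      obtain ⟨hc1, hc2⟩ := hcon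
      linarith
    have hz1 : P {ω | z (⟨k - 2, istar_lt⟩ : Fin n) ω < -1} = 0 := by
      have : {ω | z (⟨k - 2, istar_lt⟩ : Fin n) ω < -1}
          = z (⟨k - 2, istar_lt⟩ : Fin n) ⁻¹' Set.Iio (-1 : ℝ) := rfl
      rw [this, ← Measure.map_apply (hmeas _) measurableSet_Iio, hunif' _, unif_Iio_neg_one]
    have hz2 : P {ω | 1 < z i ω} = 0 := by
      have : {ω | 1 < z i ω} = z i ⁻¹' Set.Ioi (1 : ℝ) := rfl
      rw [this, ← Measure.map_apply (hmeas _) measurableSet_Ioi, hunif' _, unif_Ioi_one]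
    have h0 : P {ω | ∀ l, l ≠ i → x l + z l ω < x i + z i ω} = 0 :=
      measure_mono_null hsub (measure_union_null hz1 hz2)
    rw [hpdef]
    simp only [h0, ENNReal.toReal_zero]
  -- symmetry among the "1" indices
  have hsym : ∀ i : Fin n, (i : ℕ) + 2 < k → p i = p ⟨0, npos⟩ := by
    intro i hi
    have hx0 : x (⟨0, npos⟩ : Fin n) = 1 := hx1 _ (by simp; omega)
    have hxi : x i = 1 := hx1 i hi
    rw [hpdef]
    simp only
    rw [hPA i, hPA ⟨0, npos⟩]
    rw [measure_pi_S_swap x i ⟨0, npos⟩ (by rw [hxi, hx0]) (hSmeas ⟨0, npos⟩)]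
  -- bound for the star index
  have hstar : p (⟨k - 2, istar_lt⟩ : Fin n) ≤ 1 / 2 + 3 / (2 * ((k : ℝ) - 1)) := by
    rw [hpdef]
    simp only
    rw [hPA]
    exact star_bound hk2 hkn x ⟨k - 2, istar_lt⟩ rfl (hx2 _ (by simp; omega)) hx1
  -- fibers of I
  have hIm : ∀ i : Fin n, MeasurableSet (I ⁻¹' {i}) :=
    fun i => hImeas (measurableSet_singleton i)
  have hfib_le : ∀ i : Fin n,
      P (I ⁻¹' {i}) ≤ P {ω | ∀ l, l ≠ i → x l + z l ω < x i + z i ω} := by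
    intro i
    have hsub : I ⁻¹' {i} \ {ω | ∀ l, l ≠ i → x l + z l ω < x i + z i ω}
        ⊆ {ω | ¬ ∀ j, j ≠ I ω → x j + z j ω < x (I ω) + z (I ω) ω} := by
      rintro ω ⟨h1, h2⟩
      simp only [Set.mem_preimage, Set.mem_singleton_iff] at h1
      simp only [Set.mem_setOf_eq]
      intro hall
      exact h2 (h1 ▸ hall)
    have hdz : P (I ⁻¹' {i} \ {ω | ∀ l, l ≠ i → x l + z l ω < x i + z i ω}) = 0 :=
      measure_mono_null hsub (ae_iff.mp hI)
    have key := measure_inter_add_diff (μ := P) (I ⁻¹' {i}) (hAmeas i)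
    rw [hdz, add_zero] at key
    rw [← key]
    exact measure_mono Set.inter_subset_right
  have hfib_sum : ∑ i : Fin n, P (I ⁻¹' {i}) = 1 := by
    have hU : (⋃ i : Fin n, I ⁻¹' {i}) = Set.univ := by
      ext ω; simp
    have hd : Pairwise (Function.onFun Disjoint fun i : Fin n => I ⁻¹' {i}) := by
      intro i j hij
      rw [Function.onFun, Set.disjoint_left]
      intro ω h1 h2
      simp only [Set.mem_preimage, Set.mem_singleton_iff] at h1 h2
      exact hij (h1.symm.trans h2)
    rw [← tsum_fintype (L := .unconditional _), ← measure_iUnion hd hIm, hU, measure_univ]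
  have hfib_eq : ∀ i : Fin n, (P (I ⁻¹' {i})).toReal = p i := by
    have hle : ∀ i ∈ Finset.univ, (P (I ⁻¹' {i})).toReal ≤ p i := fun i _ =>
      ENNReal.toReal_mono (measure_ne_top _ _) (hfib_le i)
    have hsums : ∑ i : Fin n, (P (I ⁻¹' {i})).toReal = ∑ i, p i := by
      rw [hsum_p]
      have := congrArg ENNReal.toReal hfib_sum
      rw [ENNReal.toReal_sum (fun i _ => measure_ne_top P _)] at this
      simpa using this
    intro i
    exact (Finset.sum_eq_sum_iff_of_le hle).mp hsums i (Finset.mem_univ i)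
  -- integral as a sum
  have hint : ∫ ω, (((I ω : ℕ) : ℝ) + 1) ∂P = ∑ i : Fin n, p i * (((i : ℕ) : ℝ) + 1) := by
    have hgm : Measurable (fun i : Fin n => ((i : ℕ) : ℝ) + 1) := measurable_of_countable _
    rw [← integral_map hImeas.aemeasurable hgm.aestronglyMeasurable]
    haveI : IsProbabilityMeasure (P.map I) := Measure.isProbabilityMeasure_map hImeas.aemeasurable
    rw [integral_fintype (Integrable.of_finite)]
    apply Finset.sum_congr rfl
    intro i _
    rw [smul_eq_mul, measureReal_def, Measure.map_apply hImeas (measurableSet_singleton i), hfib_eq i]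
  -- final arithmetic
  have hkR : (2 : ℝ) ≤ (k : ℝ) := by exact_mod_cast hk2
  have hcast2 : ((k - 2 : ℕ) : ℝ) = (k : ℝ) - 2 := by
    rw [Nat.cast_sub (by omega)]; norm_num
  -- split the sums
  have hsum_split : ∀ (f : Fin n → ℝ),
      ∑ i : Fin n, f i = ∑ i ∈ Finset.univ.filter (fun i : Fin n => (i : ℕ) < k - 2), f i
        + ∑ i ∈ Finset.univ.filter (fun i : Fin n => ¬ (i : ℕ) < k - 2), f i :=
    fun f => (Finset.sum_filter_add_sum_filter_not Finset.univ _ f).symm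
  have hsecond : ∀ (f : Fin n → ℝ), (∀ i : Fin n, k ≤ (i : ℕ) + 1 → f i = 0) →
      ∑ i ∈ Finset.univ.filter (fun i : Fin n => ¬ (i : ℕ) < k - 2), f i
        = f ⟨k - 2, istar_lt⟩ := by
    intro f hf
    apply Finset.sum_eq_single_of_mem
    · simp only [Finset.mem_filter, Finset.mem_univ, true_and, Fin.val_mk]
      omega
    · intro b hb hbne
      simp only [Finset.mem_filter, Finset.mem_univ, true_and] at hb
      apply hf
      have : (b : ℕ) ≠ k - 2 := by
        intro hcon
        exact hbne (Fin.ext (by simp [hcon]))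
      omega
  have hq0 : 0 ≤ p ⟨0, npos⟩ := hp_nonneg _
  -- sum of p
  have e2 : ((k : ℝ) - 2) * p ⟨0, npos⟩ + p ⟨k - 2, istar_lt⟩ = 1 := by
    rw [← hsum_p, hsum_split p, hsecond p hnull]
    congr 1
    have hc : ∀ i ∈ Finset.univ.filter (fun i : Fin n => (i : ℕ) < k - 2),
        p i = p ⟨0, npos⟩ := by
      intro i hi
      simp only [Finset.mem_filter, Finset.mem_univ, true_and] at hi
      exact hsym i (by omega)
    rw [Finset.sum_congr rfl hc, Finset.sum_const, nsmul_eq_mul,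
      card_filter_val_lt npos (by omega), hcast2]
  -- weighted sum
  have e1 : ∑ i : Fin n, p i * (((i : ℕ) : ℝ) + 1)
      = p ⟨0, npos⟩ * (((k : ℝ) - 2) * ((k : ℝ) - 1) / 2)
        + p ⟨k - 2, istar_lt⟩ * ((k : ℝ) - 1) := by
    rw [hsum_split (fun i => p i * (((i : ℕ) : ℝ) + 1))]
    rw [hsecond (fun i => p i * (((i : ℕ) : ℝ) + 1))
      (fun i hi => by simp only [hnull i hi, zero_mul])]
    congr 1
    · have hc : ∀ i ∈ Finset.univ.filter (fun i : Fin n => (i : ℕ) < k - 2),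
          p i * (((i : ℕ) : ℝ) + 1) = p ⟨0, npos⟩ * (((i : ℕ) : ℝ) + 1) := by
        intro i hi
        simp only [Finset.mem_filter, Finset.mem_univ, true_and] at hi
        rw [hsym i (by omega)]
      rw [Finset.sum_congr rfl hc, ← Finset.mul_sum]
      congr 1
      rw [filter_val_lt_sum npos (by omega) (fun t => (t : ℝ) + 1), gauss_sum_real]
      rw [hcast2]
      ring
    · simp only [Fin.val_mk, hcast2]
      ring
  rw [hint, e1]
  -- now pure real arithmetic
  set qr := p ⟨0, npos⟩
  set pr := p ⟨k - 2, istar_lt⟩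
  have h3' : (pr - 1 / 2) * (2 * ((k : ℝ) - 1)) ≤ 3 :=
    (le_div_iff₀ (by linarith)).mp (by linarith [hstar])
  have h4 : qr * ((k : ℝ) - 2) = 1 - pr := by linarith [e2]
  have h5 : qr * (((k : ℝ) - 2) * (((k : ℝ)) - 1) / 2) = (1 - pr) * ((k : ℝ) - 1) / 2 := by
    rw [show qr * (((k : ℝ) - 2) * ((k : ℝ) - 1) / 2)
      = (qr * ((k : ℝ) - 2)) * (((k : ℝ) - 1) / 2) by ring, h4]
    ring
  rw [h5]
  nlinarith [h3', hkR]
end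

section
/- Let n ≥ 1 and consider the matrix game L ∈ ℝ^{n×n}. For every ε with 0 ≤ ε < 1, the pure strategy pair (eₙ, eₙ) is an ε-Nash equilibrium of L, and it is the unique pure ε-Nash equilibrium: if i, j ∈ [n] are such that (e_i, e_j) is an ε-Nash equilibrium of L, then i = n and j = n. -/
open Finset

/-- The matrix `L`: `L i j = 1` if `j > i`, `0` if `i = j`, `-1` if `j < i`. -/
def Lmat (n : ℕ) : Matrix (Fin n) (Fin n) ℝ := fun i j =>
  if i < j then 1 else if i = j then 0 else -1

/-- `(p, q)` is an `ε`-Nash equilibrium of the matrix game `M`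
(row player minimizes, column player maximizes):
`M(p,q) - BRVal_r(q) ≤ ε` and `BRVal_c(p) - M(p,q) ≤ ε`. -/
def IsEpsNE {n : ℕ} (M : Matrix (Fin n) (Fin n) ℝ) (ε : ℝ) (p q : Fin n → ℝ) : Prop :=
  (∑ i, ∑ j, p i * M i j * q j) - (⨅ i, ∑ j, M i j * q j) ≤ ε ∧
  (⨆ j, ∑ i, p i * M i j) - (∑ i, ∑ j, p i * M i j * q j) ≤ ε

lemma sum_mul_single {m : ℕ} (f : Fin m → ℝ) (b : Fin m) :
    ∑ j, f j * (Pi.single b 1 : Fin m → ℝ) j = f b := by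
  simp [Pi.single_apply, mul_ite]

lemma sum_single_mul {m : ℕ} (f : Fin m → ℝ) (a : Fin m) :
    ∑ i, (Pi.single a 1 : Fin m → ℝ) i * f i = f a := by
  simp [Pi.single_apply, ite_mul]

lemma pure_payoff {m : ℕ} (M : Matrix (Fin m) (Fin m) ℝ) (a b : Fin m) :
    (∑ i, ∑ j, (Pi.single a 1 : Fin m → ℝ) i * M i j * (Pi.single b 1 : Fin m → ℝ) j) = M a b := by
  have : ∀ i, ∑ j, (Pi.single a 1 : Fin m → ℝ) i * M i j * (Pi.single b 1 : Fin m → ℝ) j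
      = (Pi.single a 1 : Fin m → ℝ) i * M i b := fun i => sum_mul_single _ b
  rw [Finset.sum_congr rfl fun i _ => this i, sum_single_mul]

lemma Lmat_le_one {m : ℕ} (i j : Fin m) : Lmat m i j ≤ 1 := by
  unfold Lmat; split_ifs <;> norm_num

lemma neg_one_le_Lmat {m : ℕ} (i j : Fin m) : (-1 : ℝ) ≤ Lmat m i j := by
  unfold Lmat; split_ifs <;> norm_num

/-- For every `0 ≤ ε < 1`, the pure pair `(e_n, e_n)` is an `ε`-Nash equilibrium of the game
`L` (of size `n+1 ≥ 1`, so `e_n` is the last basis vector), and it is the unique pure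
`ε`-Nash equilibrium. -/
theorem Lmat_unique_pure_epsNE (n : ℕ) (ε : ℝ) (hε0 : 0 ≤ ε) (hε1 : ε < 1) :
    IsEpsNE (Lmat (n + 1)) ε (Pi.single (Fin.last n) 1) (Pi.single (Fin.last n) 1) ∧
    ∀ i j : Fin (n + 1),
      IsEpsNE (Lmat (n + 1)) ε (Pi.single i 1) (Pi.single j 1) →
      i = Fin.last n ∧ j = Fin.last n := by
  have hBddB : ∀ (f : Fin (n+1) → ℝ), BddBelow (Set.range f) :=
    fun f => (Set.finite_range f).bddBelow
  have hBddA : ∀ (f : Fin (n+1) → ℝ), BddAbove (Set.range f) :=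
    fun f => (Set.finite_range f).bddAbove
  -- simplified forms of the expressions for pure strategies
  have hrow : ∀ (i b : Fin (n+1)), (∑ j, Lmat (n+1) i j * (Pi.single b 1 : Fin (n+1) → ℝ) j) = Lmat (n+1) i b :=
    fun i b => sum_mul_single _ b
  have hcol : ∀ (a j : Fin (n+1)), (∑ i, (Pi.single a 1 : Fin (n+1) → ℝ) i * Lmat (n+1) i j) = Lmat (n+1) a j :=
    fun a j => sum_single_mul _ a
  have hNE : ∀ a b : Fin (n+1),
      IsEpsNE (Lmat (n + 1)) ε (Pi.single a 1) (Pi.single b 1) ↔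
      (Lmat (n+1) a b - (⨅ i, Lmat (n+1) i b) ≤ ε ∧
       (⨆ j, Lmat (n+1) a j) - Lmat (n+1) a b ≤ ε) := by
    intro a b
    unfold IsEpsNE
    rw [pure_payoff]
    constructor
    · rintro ⟨h1, h2⟩
      refine ⟨?_, ?_⟩
      · simpa [hrow] using h1
      · simpa [hcol] using h2
    · rintro ⟨h1, h2⟩
      refine ⟨?_, ?_⟩
      · simpa [hrow] using h1
      · simpa [hcol] using h2
  constructor
  · rw [hNE]
    have hLL : Lmat (n+1) (Fin.last n) (Fin.last n) = 0 := by
      unfold Lmat; simp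
    rw [hLL]
    constructor
    · have hinf : (0:ℝ) ≤ ⨅ i, Lmat (n+1) i (Fin.last n) := by
        apply le_ciInf
        intro i
        unfold Lmat
        split_ifs with h1 h2
        · norm_num
        · exact le_rfl
        · exact absurd (lt_of_le_of_ne (Fin.le_last i) h2) h1
      linarith
    · have hsup : (⨆ j, Lmat (n+1) (Fin.last n) j) ≤ 0 := by
        apply ciSup_le
        intro j
        unfold Lmat
        split_ifs with h1 h2
        · exact absurd (Fin.le_last j) (not_le.mpr h1)
        · exact le_rfl
        · norm_num
      linarith
  · intro i j h
    rw [hNE] at h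
    obtain ⟨h1, h2⟩ := h
    have hj : j = Fin.last n := by
      by_contra hj
      have hjl : j < Fin.last n := lt_of_le_of_ne (Fin.le_last j) hj
      have hinf : (⨅ i', Lmat (n+1) i' j) ≤ -1 := by
        have := ciInf_le (hBddB (fun i' => Lmat (n+1) i' j)) (Fin.last n)
        have hv : Lmat (n+1) (Fin.last n) j = -1 := by
          unfold Lmat
          rw [if_neg (by exact not_lt.mpr hjl.le), if_neg (by exact (ne_of_gt hjl))]
        linarith [this, hv.symm ▸ this]
      have hLij : Lmat (n+1) i j ≤ ε - 1 := by linarith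
      have hLij0 : Lmat (n+1) i j < 0 := by linarith
      have hLijm1 : Lmat (n+1) i j = -1 := by
        unfold Lmat at hLij0 ⊢
        split_ifs at hLij0 ⊢ <;> linarith
      have hsup : Lmat (n+1) i i ≤ ⨆ j', Lmat (n+1) i j' :=
        le_ciSup (hBddA (fun j' => Lmat (n+1) i j')) i
      have hii : Lmat (n+1) i i = 0 := by unfold Lmat; simp
      linarith
    subst hj
    refine ⟨?_, rfl⟩
    have hinf : (⨅ i', Lmat (n+1) i' (Fin.last n)) ≤ 0 := by
      have := ciInf_le (hBddB (fun i' => Lmat (n+1) i' (Fin.last n))) (Fin.last n)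
      have hv : Lmat (n+1) (Fin.last n) (Fin.last n) = 0 := by unfold Lmat; simp
      linarith [hv ▸ this]
    have hLi : Lmat (n+1) i (Fin.last n) < 1 := by linarith
    by_contra hi
    have hil : i < Fin.last n := lt_of_le_of_ne (Fin.le_last i) hi
    have : Lmat (n+1) i (Fin.last n) = 1 := by
      unfold Lmat; rw [if_pos hil]
    linarith
end

section
/- Let n ≥ 1 and consider the matrix game S ∈ ℝ^{n×n}. Then (e₁, e₁) is the unique Nash equilibrium of S: a pair (p,q) ∈ Δ_n × Δ_n is a Nash equilibrium of S if and only if p = e₁ and q = e₁. -/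
open Finset

/-- `(p, q)` is a Nash equilibrium of the matrix game `M`
(row player minimizes, column player maximizes):
`M(p,q) - BRVal_r(q) ≤ 0` and `BRVal_c(p) - M(p,q) ≤ 0`. -/
def IsNE {n : ℕ} (M : Matrix (Fin n) (Fin n) ℝ) (p q : Fin n → ℝ) : Prop :=
  (∑ i, ∑ j, p i * M i j * q j) - (⨅ i, ∑ j, M i j * q j) ≤ 0 ∧
  (⨆ j, ∑ i, p i * M i j) - (∑ i, ∑ j, p i * M i j * q j) ≤ 0

lemma Smat_antisymm (n : ℕ) (i j : Fin n) : Smat n j i = -Smat n i j := by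
  unfold Smat
  rcases lt_trichotomy i j with h | h | h
  · simp [h, h.ne, h.ne', not_lt.mpr h.le]
  · simp [h]
  · simp [h, h.ne, h.ne', not_lt.mpr h.le]

lemma Smat_quad (m : ℕ) (x : Fin m → ℝ) :
    ∑ i, ∑ j, x i * Smat m i j * x j = 0 := by
  have h : (∑ i, ∑ j, x i * Smat m i j * x j)
      = -(∑ i, ∑ j, x i * Smat m i j * x j) := by
    calc ∑ i, ∑ j, x i * Smat m i j * x j
        = ∑ j, ∑ i, x i * Smat m i j * x j := Finset.sum_comm
      _ = ∑ j, ∑ i, -(x j * Smat m j i * x i) := by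
          refine Finset.sum_congr rfl fun a _ => Finset.sum_congr rfl fun b _ => ?_
          rw [Smat_antisymm]; ring
      _ = -(∑ i, ∑ j, x i * Smat m i j * x j) := by
          simp [Finset.sum_neg_distrib]
  linarith

lemma single_of_ge_one (n : ℕ) (q : Fin (n + 1) → ℝ)
    (hq0 : ∀ j, 0 ≤ q j) (hq1 : ∑ j, q j = 1) (h : 1 ≤ q 0) :
    q = Pi.single (0 : Fin (n + 1)) 1 := by
  have hz : ∀ j : Fin (n + 1), j ≠ 0 → q j = 0 := by
    intro j hj
    have hsub : ({0, j} : Finset (Fin (n + 1))) ⊆ univ := subset_univ _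
    have hpair : ∑ k ∈ ({0, j} : Finset (Fin (n + 1))), q k = q 0 + q j :=
      Finset.sum_pair (Ne.symm hj)
    have hle : ∑ k ∈ ({0, j} : Finset (Fin (n + 1))), q k ≤ ∑ k, q k :=
      Finset.sum_le_sum_of_subset_of_nonneg hsub (fun i _ _ => hq0 i)
    have := hq0 j
    rw [hpair, hq1] at hle
    linarith
  funext j
  by_cases hj : j = 0
  · subst hj
    have : ∑ k, q k = q 0 := Finset.sum_eq_single 0 (fun b _ hb => hz b hb) (by simp)
    rw [hq1] at this
    simp [← this]
  · simp [Pi.single_apply, hj, hz j hj]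

/-- `(e₁, e₁)` is the unique Nash equilibrium of the game `S` (of size `n+1 ≥ 1`):
a pair `(p, q) ∈ Δ × Δ` is a Nash equilibrium iff `p = e₁` and `q = e₁`. -/
theorem Smat_unique_NE (n : ℕ) (p q : Fin (n + 1) → ℝ)
    (hp0 : ∀ i, 0 ≤ p i) (hp1 : ∑ i, p i = 1)
    (hq0 : ∀ j, 0 ≤ q j) (hq1 : ∑ j, q j = 1) :
    IsNE (Smat (n + 1)) p q ↔
      (p = Pi.single (0 : Fin (n + 1)) 1 ∧ q = Pi.single (0 : Fin (n + 1)) 1) := by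

  set g : Fin (n + 1) → ℝ := fun i => ∑ j, Smat (n + 1) i j * q j with hgdef
  set h : Fin (n + 1) → ℝ := fun j => ∑ i, p i * Smat (n + 1) i j with hhdef
  have hbg : BddBelow (Set.range g) := Finite.bddBelow_range g
  have hbh : BddAbove (Set.range h) := Finite.bddAbove_range h
  constructor
  · rintro ⟨c1, c2⟩
    -- qᵀ S q = 0 rearranged:
    have hqg : ∑ i, q i * g i = 0 := by
      rw [← Smat_quad (n + 1) q]
      refine Finset.sum_congr rfl fun i _ => ?_
      rw [hgdef, Finset.mul_sum]
      exact Finset.sum_congr rfl fun j _ => by ring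
    have hph : ∑ j, p j * h j = 0 := by
      rw [← Smat_quad (n + 1) p]
      rw [Finset.sum_comm]
      refine Finset.sum_congr rfl fun j _ => ?_
      rw [hhdef, Finset.mul_sum]
      exact Finset.sum_congr rfl fun i _ => by ring
    have hinf_le : (⨅ i, g i) ≤ 0 := by
      have : (⨅ i, g i) = ∑ i, q i * (⨅ i, g i) := by
        rw [← Finset.sum_mul, hq1, one_mul]
      rw [this, ← hqg]
      exact Finset.sum_le_sum fun i _ =>
        mul_le_mul_of_nonneg_left (ciInf_le hbg i) (hq0 i)
    have hsup_ge : 0 ≤ ⨆ j, h j := by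
      have heq : (⨆ j, h j) = ∑ j, p j * (⨆ j, h j) := by
        rw [← Finset.sum_mul, hp1, one_mul]
      rw [← hph, heq]
      exact Finset.sum_le_sum fun j _ =>
        mul_le_mul_of_nonneg_left (le_ciSup hbh j) (hp0 j)
    have hV1 : (∑ i, ∑ j, p i * Smat (n + 1) i j * q j) ≤ ⨅ i, g i := by
      linarith
    have hV2 : (⨆ j, h j) ≤ ∑ i, ∑ j, p i * Smat (n + 1) i j * q j := by
      linarith
    have hinf0 : (⨅ i, g i) = 0 := le_antisymm hinf_le (by linarith)
    have hsup0 : (⨆ j, h j) = 0 := le_antisymm (by linarith) hsup_ge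
    -- g 0 = q 0 - 1
    have hg0 : g 0 = q 0 - 1 := by
      rw [hgdef]
      have key : ∀ j : Fin (n + 1), Smat (n + 1) 0 j * q j
          = (if j = 0 then q j else 0) - q j := by
        intro j
        by_cases hj : j = 0
        · subst hj; simp [Smat]
        · have h0j : ¬ ((0 : Fin (n + 1)) = j) := fun hh => hj hh.symm
          have : ¬ (j < (0 : Fin (n + 1))) := by simp
          simp [Smat, this, h0j, hj]
      simp only [key]
      rw [Finset.sum_sub_distrib, hq1, Finset.sum_ite_eq' univ (0 : Fin (n + 1)) q]
      simp
    have hh0 : h 0 = 1 - p 0 := by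
      rw [hhdef]
      have key : ∀ i : Fin (n + 1), p i * Smat (n + 1) i 0
          = p i - (if i = 0 then p i else 0) := by
        intro i
        by_cases hi : i = 0
        · subst hi; simp [Smat]
        · have hpos : (0 : Fin (n + 1)) < i := by
            exact lt_of_le_of_ne (Fin.zero_le i) (fun hh => hi hh.symm)
          simp [Smat, hpos, hi]
      simp only [key]
      rw [Finset.sum_sub_distrib, hp1, Finset.sum_ite_eq' univ (0 : Fin (n + 1)) p]
      simp
    have hq0ge : 1 ≤ q 0 := by
      have := ciInf_le hbg (0 : Fin (n + 1))
      rw [hinf0] at this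
      rw [hg0] at this
      linarith
    have hp0ge : 1 ≤ p 0 := by
      have := le_ciSup hbh (0 : Fin (n + 1))
      rw [hsup0] at this
      rw [hh0] at this
      linarith
    exact ⟨single_of_ge_one n p hp0 hp1 hp0ge, single_of_ge_one n q hq0 hq1 hq0ge⟩
  · rintro ⟨hp, hq⟩
    subst hp; subst hq
    have hgval : ∀ i, g i = if i = 0 then 0 else 1 := by
      intro i
      rw [hgdef]
      simp only [Pi.single_apply, mul_ite, mul_one, mul_zero]
      rw [Finset.sum_ite_eq' univ (0 : Fin (n + 1)) (fun j => Smat (n + 1) i j)]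
      by_cases hi : i = 0
      · subst hi; simp [Smat]
      · have hpos : (0 : Fin (n + 1)) < i :=
          lt_of_le_of_ne (Fin.zero_le i) (fun hh => hi hh.symm)
        simp [Smat, hpos, hi]
    have hhval : ∀ j, h j = if j = 0 then 0 else -1 := by
      intro j
      rw [hhdef]
      simp only [Pi.single_apply, ite_mul, one_mul, zero_mul]
      rw [Finset.sum_ite_eq' univ (0 : Fin (n + 1)) (fun i => Smat (n + 1) i j)]
      by_cases hj : j = 0
      · subst hj; simp [Smat]
      · have h0j : ¬ ((0 : Fin (n + 1)) = j) := fun hh => hj hh.symm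
        have hnlt : ¬ (j < (0 : Fin (n + 1))) := by simp
        simp [Smat, hnlt, h0j, hj]
    have hV : (∑ i, ∑ j, (Pi.single (0 : Fin (n+1)) 1 : Fin (n+1) → ℝ) i * Smat (n + 1) i j *
        (Pi.single (0 : Fin (n+1)) 1 : Fin (n+1) → ℝ) j) = 0 := by
      have : ∀ i, ∑ j, (Pi.single (0 : Fin (n+1)) 1 : Fin (n+1) → ℝ) i * Smat (n + 1) i j *
          (Pi.single (0 : Fin (n+1)) 1 : Fin (n+1) → ℝ) j
          = (Pi.single (0 : Fin (n+1)) 1 : Fin (n+1) → ℝ) i * Smat (n + 1) i 0 := by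
        intro i
        simp only [Pi.single_apply, mul_ite, mul_one, mul_zero]
        rw [Finset.sum_ite_eq' univ (0 : Fin (n + 1))]
        simp
      rw [Finset.sum_congr rfl fun i _ => this i]
      simp only [Pi.single_apply, ite_mul, one_mul, zero_mul]
      rw [Finset.sum_ite_eq' univ (0 : Fin (n + 1)) (fun i => Smat (n + 1) i 0)]
      simp [Smat]
    have hinf : (⨅ i, g i) = 0 := by
      refine le_antisymm ?_ (le_ciInf fun i => ?_)
      · have := ciInf_le hbg (0 : Fin (n + 1))
        rwa [hgval 0, if_pos rfl] at this
      · rw [hgval i]; split <;> norm_num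
    have hsup : (⨆ j, h j) = 0 := by
      refine le_antisymm (ciSup_le fun j => ?_) ?_
      · rw [hhval j]; split <;> norm_num
      · have := le_ciSup hbh (0 : Fin (n + 1))
        rwa [hhval 0, if_pos rfl] at this
    constructor
    · rw [hV]
      have : (⨅ i, ∑ j, Smat (n + 1) i j * (Pi.single (0 : Fin (n+1)) 1 : Fin (n+1) → ℝ) j) = ⨅ i, g i := rfl
      rw [this, hinf]
      norm_num
    · rw [hV]
      have : (⨆ j, ∑ i, (Pi.single (0 : Fin (n+1)) 1 : Fin (n+1) → ℝ) i * Smat (n + 1) i j) = ⨆ j, h j := rfl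
      rw [this, hsup]
      norm_num
end
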